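/- arXiv:2401.12010 — 9 statements merged into one kernel-verified Lean document; each statement's English description precedes it below -/
import Mathlib

section
/- Let G = (V, E) be a finite undirected graph with incidence weights β̃_{v,e} = 1 if edge e is incident to vertex v and β̃_{v,e} = 0 otherwise. Suppose there exists a blocking decision x ∈ {0,1}^{V×E} with Σ_{v∈V} x_{v,e} ≤ 1 for every e ∈ E such that max{ Σ_{v,e} β̃_{v,e} y_{v,e} : y ∈ {0,1}^{V×E}, y ≤ 1 − x, Σ_{e∈E} y_{v,e} ≤ 1 for every v ∈ V } ≤ |V| − q for some integer q ≥ 0. Then G contains an independent set S ⊆ V (no two vertices of S joined by an edge of E) with |S| ≥ q. -/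
/-!
Call a vertex fully blocked if the leader blocks it on every incident edge. Two adjacent fully
blocked vertices would both block their common edge, which the leader may block at most once, so
the fully blocked vertices form an independent set `S`. Every other vertex still has an incident
edge open to it, and letting each such vertex take one of these edges is a feasible follower
response of value `|V| - |S|`. Hence `|V| - |S| ≤ |V| - q`.
-/

open Finset

namespace SimpleGraph

variable {V : Type*} [Fintype V] [DecidableEq V] (G : SimpleGraph V) [DecidableRel G.Adj]

def followerValues (x : V → Sym2 V → ℝ) : Set ℝ :=
  {w : ℝ | ∃ y : V → Sym2 V → ℝ,
    (∀ v e, y v e = 0 ∨ y v e = 1) ∧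
    (∀ v e, y v e ≤ 1 - x v e) ∧
    (∀ v : V, ∑ e ∈ G.edgeFinset, y v e ≤ 1) ∧
    w = ∑ v : V, ∑ e ∈ G.edgeFinset, (if v ∈ e then (1 : ℝ) else 0) * y v e}

noncomputable def fullyBlockedVertices (x : V → Sym2 V → ℝ) : Finset V :=
  {v | ∀ e ∈ G.edgeFinset, v ∈ e → x v e = 1}

variable {G}

theorem isIndepSet_fullyBlockedVertices {x : V → Sym2 V → ℝ} (hx0 : ∀ v e, 0 ≤ x v e)
    (hxfeas : ∀ e ∈ G.edgeFinset, ∑ v : V, x v e ≤ 1) :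
    G.IsIndepSet (fullyBlockedVertices G x : Set V) := by
  intro v hv w hw hne hadj
  have he : s(v, w) ∈ G.edgeFinset := G.mem_edgeFinset.mpr hadj
  have hvw : x v s(v, w) = 1 := (mem_filter.mp hv).2 _ he (Sym2.mem_mk_left v w)
  have hwv : x w s(v, w) = 1 := (mem_filter.mp hw).2 _ he (Sym2.mem_mk_right v w)
  have := add_le_sum (f := fun u => x u s(v, w)) (fun u _ => hx0 u _)
    (mem_univ v) (mem_univ w) hne
  linarith [hxfeas _ he]

theorem exists_open_edge_of_notMem_fullyBlockedVertices {x : V → Sym2 V → ℝ}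
    (hxbin : ∀ v e, x v e = 0 ∨ x v e = 1) {v : V} (hv : v ∉ fullyBlockedVertices G x) :
    ∃ e ∈ G.edgeFinset, v ∈ e ∧ x v e = 0 := by
  simp only [fullyBlockedVertices, mem_filter, mem_univ, true_and, not_forall] at hv
  obtain ⟨e, he, hve, hx⟩ := hv
  exact ⟨e, he, hve, (hxbin v e).resolve_right hx⟩

theorem followerValues_bddAbove (x : V → Sym2 V → ℝ) :
    BddAbove (followerValues G x) := by
  refine ⟨Fintype.card V, ?_⟩
  rintro w ⟨y, hybin, -, hyrow, rfl⟩
  have hy0 : ∀ v e, 0 ≤ y v e := fun v e => by rcases hybin v e with h | h <;> simp [h]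
  calc ∑ v : V, ∑ e ∈ G.edgeFinset, (if v ∈ e then (1 : ℝ) else 0) * y v e
      ≤ ∑ v : V, ∑ e ∈ G.edgeFinset, y v e := by
        gcongr with v _ e _
        split_ifs <;> simp [hy0 v e]
    _ ≤ ∑ _v : V, (1 : ℝ) := sum_le_sum fun v _ => hyrow v
    _ = Fintype.card V := by simp

theorem card_mem_followerValues {x : V → Sym2 V → ℝ} (hx1 : ∀ v e, x v e ≤ 1)
    (T : Finset V) (g : V → Sym2 V)
    (hg : ∀ v ∈ T, g v ∈ G.edgeFinset ∧ v ∈ g v ∧ x v (g v) = 0) :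
    (#T : ℝ) ∈ followerValues G x := by
  let y : V → Sym2 V → ℝ := fun v e => if v ∈ T ∧ g v = e then 1 else 0
  refine ⟨y, fun v e => by unfold y; split_ifs <;> simp, ?_, fun v => ?_, ?_⟩
  · intro v e
    by_cases h : v ∈ T ∧ g v = e
    · obtain ⟨hv, rfl⟩ := h
      simp [y, hv, (hg v hv).2.2]
    · simpa [y, h] using hx1 v e
  · by_cases hv : v ∈ T
    · simp [y, hv, (hg v hv).1]
    · simp [y, hv]
  · have hinner : ∀ v, ∑ e ∈ G.edgeFinset, (if v ∈ e then (1 : ℝ) else 0) * y v e = y v (g v) := by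
      intro v
      by_cases hv : v ∈ T
      · rw [sum_eq_single (g v) (fun e _ he => by simp [y, Ne.symm he])
          (fun h => absurd (hg v hv).1 h)]
        simp [(hg v hv).2.1]
      · simp [y, hv]
    simp only [hinner, y, and_true, sum_boole, filter_mem_eq_inter, univ_inter]

theorem card_compl_fullyBlockedVertices_mem_followerValues {x : V → Sym2 V → ℝ}
    (hxbin : ∀ v e, x v e = 0 ∨ x v e = 1) :
    (#(fullyBlockedVertices G x)ᶜ : ℝ) ∈ followerValues G x := by
  have hopen : ∀ v, ∃ e : Sym2 V, v ∉ fullyBlockedVertices G x →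
      e ∈ G.edgeFinset ∧ v ∈ e ∧ x v e = 0 := by
    intro v
    by_cases hv : v ∈ fullyBlockedVertices G x
    · exact ⟨s(v, v), fun h => absurd hv h⟩
    · obtain ⟨e, he⟩ := exists_open_edge_of_notMem_fullyBlockedVertices hxbin hv
      exact ⟨e, fun _ => he⟩
  choose g hg using hopen
  refine card_mem_followerValues (fun v e => ?_) _ g fun v hv => hg v (mem_compl.mp hv)
  rcases hxbin v e with h | h <;> simp [h]

end SimpleGraph

/-- If there is a feasible leader blocking decision `x` for which the
follower's optimal value is at most `|V| - q`, then `G` has an independent set of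
size at least `q`. -/
theorem pmi_to_mis {V : Type*} [Fintype V] [DecidableEq V]
    (G : SimpleGraph V) [DecidableRel G.Adj] (q : ℕ)
    (x : V → Sym2 V → ℝ)
    (hxbin : ∀ v e, x v e = 0 ∨ x v e = 1)
    (hxfeas : ∀ e ∈ G.edgeFinset, ∑ v : V, x v e ≤ 1)
    (hmax : sSup {w : ℝ | ∃ y : V → Sym2 V → ℝ,
        (∀ v e, y v e = 0 ∨ y v e = 1) ∧
        (∀ v e, y v e ≤ 1 - x v e) ∧
        (∀ v : V, ∑ e ∈ G.edgeFinset, y v e ≤ 1) ∧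
        w = ∑ v : V, ∑ e ∈ G.edgeFinset, (if v ∈ e then (1 : ℝ) else 0) * y v e}
      ≤ (Fintype.card V : ℝ) - q) :
    ∃ S : Finset V, (∀ v ∈ S, ∀ w ∈ S, ¬ G.Adj v w) ∧ q ≤ S.card := by
  set S := G.fullyBlockedVertices x
  have hx0 : ∀ v e, 0 ≤ x v e := fun v e => by rcases hxbin v e with h | h <;> simp [h]
  have hS : G.IsIndepSet (S : Set V) := SimpleGraph.isIndepSet_fullyBlockedVertices hx0 hxfeas
  refine ⟨S, fun v hv w hw hadj => hS hv hw hadj.ne hadj, ?_⟩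
  have hvalue : (#Sᶜ : ℝ) ≤ Fintype.card V - q :=
    (le_csSup (SimpleGraph.followerValues_bddAbove x)
      (SimpleGraph.card_compl_fullyBlockedVertices_mem_followerValues hxbin)).trans hmax
  have hcard : (#S : ℝ) + #Sᶜ = Fintype.card V := by exact_mod_cast S.card_add_card_compl
  exact_mod_cast (by linarith : (q : ℝ) ≤ #S)
end

section
/- Let G = (V, E) be a finite undirected graph with incidence weights β̃_{v,e} = 1 if edge e is incident to vertex v and β̃_{v,e} = 0 otherwise. If G contains an independent set S ⊆ V with |S| ≥ q for some integer q ≥ 0, then there exists x ∈ {0,1}^{V×E} with Σ_{v∈V} x_{v,e} ≤ 1 for every e ∈ E such that max{ Σ_{v,e} β̃_{v,e} y_{v,e} : y ∈ {0,1}^{V×E}, y ≤ 1 − x, Σ_{e∈E} y_{v,e} ≤ 1 for every v ∈ V } ≤ |V| − q. (In particular, an explicit such x is given by x_{v,e} = 1 if and only if β̃_{v,e} = 1 and v ∈ S.) -/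
/-- If `G` has an independent set `S` with `|S| ≥ q`, then the explicit
blocking decision `x_{v,e} = 1` iff `v ∈ e` and `v ∈ S` is leader-feasible and forces
the follower's optimal value to be at most `|V| - q`. -/
theorem mis_to_pmi {V : Type*} [Fintype V] [DecidableEq V]
    (G : SimpleGraph V) [DecidableRel G.Adj] (q : ℕ)
    (S : Finset V) (hS : ∀ v ∈ S, ∀ w ∈ S, ¬ G.Adj v w) (hSq : q ≤ S.card) :
    ∃ x : V → Sym2 V → ℝ,
      (x = fun v e => if v ∈ e ∧ v ∈ S then (1 : ℝ) else 0) ∧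
      (∀ v e, x v e = 0 ∨ x v e = 1) ∧
      (∀ e ∈ G.edgeFinset, ∑ v : V, x v e ≤ 1) ∧
      sSup {w : ℝ | ∃ y : V → Sym2 V → ℝ,
        (∀ v e, y v e = 0 ∨ y v e = 1) ∧
        (∀ v e, y v e ≤ 1 - x v e) ∧
        (∀ v : V, ∑ e ∈ G.edgeFinset, y v e ≤ 1) ∧
        w = ∑ v : V, ∑ e ∈ G.edgeFinset, (if v ∈ e then (1 : ℝ) else 0) * y v e}
      ≤ (Fintype.card V : ℝ) - q := by
  have hScard : (q : ℝ) ≤ (S.card : ℝ) := by exact_mod_cast hSq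
  have hSV : (S.card : ℝ) ≤ (Fintype.card V : ℝ) := by exact_mod_cast S.card_le_univ
  refine ⟨_, rfl, ?_, ?_, ?_⟩
  · intro v e; by_cases h : v ∈ e ∧ v ∈ S <;> simp [h]
  · intro e he
    rw [Finset.sum_boole]
    have hcard : (Finset.univ.filter (fun v => v ∈ e ∧ v ∈ S)).card ≤ 1 := by
      rw [Finset.card_le_one]
      intro u hu w hw
      simp only [Finset.mem_filter] at hu hw
      by_contra hne
      have heq : e = s(u, w) := (Sym2.mem_and_mem_iff hne).mp ⟨hu.2.1, hw.2.1⟩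
      rw [SimpleGraph.mem_edgeFinset, heq, SimpleGraph.mem_edgeSet] at he
      exact hS u hu.2.2 w hw.2.2 he
    exact_mod_cast hcard
  · apply Real.sSup_le
    · rintro w ⟨y, hybin, hyle, hysum, rfl⟩
      have hy0 : ∀ v e, 0 ≤ y v e := by
        intro v e; rcases hybin v e with h | h <;> simp [h]
      have key : ∑ v : V, ∑ e ∈ G.edgeFinset, (if v ∈ e then (1 : ℝ) else 0) * y v e
          ≤ ∑ v : V, (if v ∈ S then (0 : ℝ) else 1) := by
        apply Finset.sum_le_sum; intro v _
        by_cases hv : v ∈ S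
        · simp only [hv, if_true]
          apply Finset.sum_nonpos; intro e _
          by_cases hve : v ∈ e
          · have h1 := hyle v e
            simp only [hve, hv, and_self, if_true] at h1
            simp only [hve, if_true, one_mul]
            linarith
          · simp [hve]
        · simp only [hv, if_false]
          calc ∑ e ∈ G.edgeFinset, (if v ∈ e then (1 : ℝ) else 0) * y v e
              ≤ ∑ e ∈ G.edgeFinset, y v e := by
                apply Finset.sum_le_sum; intro e _
                by_cases hve : v ∈ e <;> simp [hve, hy0 v e]
            _ ≤ 1 := hysum v
      have heq : ∑ v : V, (if v ∈ S then (0 : ℝ) else 1)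
          = (Fintype.card V : ℝ) - S.card := by
        have h1 : ∀ v : V, (if v ∈ S then (0 : ℝ) else 1)
            = 1 - (if v ∈ S then 1 else 0) := by
          intro v; by_cases h : v ∈ S <;> simp [h]
        simp_rw [h1, Finset.sum_sub_distrib, Finset.sum_const, Finset.sum_boole]
        simp [Finset.filter_mem_eq_inter]
      rw [heq] at key
      linarith
    · linarith
end

section
/- The partition matroid interdiction problem satisfies the dual reformulation: min_{x ∈ I_X} max_{y ∈ I_Y(x)} β^T y = min_{x ∈ I_X} Σ_{k=1}^{k_f} min_{j ∈ {0,…,n}} ( β_j f_k + Σ_{i ∈ F_k, i > j} (β_i − β_j)(1 − x_i) ). -/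
/-!
For a fixed binary interdiction `x`, the follower's problem splits into one independent problem
per group `F_k`: take at most `f_k` of the items of `F_k` left open by `x`, of largest total weight.
The inner minimum over `j` is its LP dual, with `j` a weight threshold. Weak duality comes from
writing `β_i = β_j + (β_i - β_j)` and monotonicity of `β`. For strong duality take the least
threshold `j` with at most `f_k` open items above it: either `j = 0`, where `β_0 = 0`, or exactly
`f_k` items lie above `j`; in both cases the dual objective at `j` is the weight of those items,
which form a feasible follower choice.
-/

/-- The follower's optimal value: the maximum of `βᵀy` over binary `y ≤ 1 - x`
satisfying the follower's capacity constraints `∑_{i ∈ F_k} y_i ≤ f_k`. -/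
noncomputable def followerVal (n kf : ℕ) (F : Fin kf → Finset ℕ) (f : Fin kf → ℕ)
    (β : ℕ → ℝ) (x : ℕ → ℝ) : ℝ :=
  sSup {v : ℝ | ∃ y : ℕ → ℝ,
    (∀ i, y i = 0 ∨ y i = 1) ∧
    (∀ i, y i ≤ 1 - x i) ∧
    (∀ k : Fin kf, ∑ i ∈ F k, y i ≤ (f k : ℝ)) ∧
    v = ∑ i ∈ Finset.Icc 1 n, β i * y i}

/-- The leader's feasible set `I_X`: binary `x` with `∑_{i ∈ L_k} x_i ≤ l_k`. -/
def leaderFeas (kl : ℕ) (L : Fin kl → Finset ℕ) (l : Fin kl → ℕ) (x : ℕ → ℝ) : Prop :=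
  (∀ i, x i = 0 ∨ x i = 1) ∧ ∀ k : Fin kl, ∑ i ∈ L k, x i ≤ (l k : ℝ)

/-- The dual value for one follower group:
`min_{j ∈ {0,…,n}} ( β_j f + ∑_{i ∈ F, i > j} (β_i - β_j)(1 - x_i) )`. -/
noncomputable def dualVal (n : ℕ) (F : Finset ℕ) (f : ℕ) (β : ℕ → ℝ) (x : ℕ → ℝ) : ℝ :=
  Finset.inf' (Finset.range (n + 1)) ⟨0, Finset.mem_range.mpr (Nat.succ_pos n)⟩
    (fun j => β j * (f : ℝ) + ∑ i ∈ F.filter (fun i => j < i), (β i - β j) * (1 - x i))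

open Finset

noncomputable def dualObjective (F : Finset ℕ) (f : ℕ) (β x : ℕ → ℝ) (j : ℕ) : ℝ :=
  β j * f + ∑ i ∈ F.filter (fun i => j < i), (β i - β j) * (1 - x i)

noncomputable def openAbove (F : Finset ℕ) (x : ℕ → ℝ) (j : ℕ) : Finset ℕ :=
  (F.filter fun i => j < i).filter fun i => x i = 0

theorem sum_mul_indicator_one {ι R : Type*} [NonAssocSemiring R] {T F : Finset ι} (h : T ⊆ F)
    (g : ι → R) : ∑ i ∈ F, g i * (T : Set ι).indicator 1 i = ∑ i ∈ T, g i := by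
  simp_rw [← Set.indicator_mul_right, Pi.one_apply, mul_one]
  exact sum_indicator_subset g h

theorem indicator_one_le_one_sub {α : Type*} {T : Set α} {x : α → ℝ} (hT : ∀ i ∈ T, x i = 0)
    {i : α} (hx : x i ≤ 1) : T.indicator 1 i ≤ 1 - x i := by
  by_cases hi : i ∈ T
  · simp [hi, hT i hi]
  · simpa [hi] using hx

theorem mem_biUnion_univ_iff_of_disjoint {ι α : Type*} [Fintype ι] [DecidableEq α]
    {F T : ι → Finset α} (hFdisj : ∀ k k', k ≠ k' → Disjoint (F k) (F k'))
    (hTF : ∀ k, T k ⊆ F k) {k : ι} {i : α} (hi : i ∈ F k) :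
    i ∈ univ.biUnion T ↔ i ∈ T k := by
  refine ⟨fun hiU => ?_, fun hiT => mem_biUnion.2 ⟨k, mem_univ k, hiT⟩⟩
  obtain ⟨k', -, hik'⟩ := mem_biUnion.1 hiU
  obtain rfl : k' = k := by_contra fun hne =>
    disjoint_left.1 (hFdisj k' k hne) (hTF k' hik') hi
  exact hik'

section Group

variable {n : ℕ} {F : Finset ℕ} {f : ℕ} {β x y : ℕ → ℝ}

theorem dualVal_le_dualObjective {j : ℕ} (hj : j ≤ n) :
    dualVal n F f β x ≤ dualObjective F f β x j :=
  inf'_le _ (mem_range.2 (Nat.lt_succ_of_le hj))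

theorem le_dualVal {a : ℝ} (h : ∀ j ≤ n, a ≤ dualObjective F f β x j) :
    a ≤ dualVal n F f β x :=
  le_inf' _ _ fun j hj => h j (Nat.lt_succ_iff.1 (mem_range.1 hj))

theorem sum_mul_le_dualObjective (hβ : MonotoneOn β (Set.Iic n)) (hF : ∀ i ∈ F, i ≤ n)
    {j : ℕ} (hj : j ≤ n) (hβj : 0 ≤ β j) (hy : ∀ i ∈ F, 0 ≤ y i)
    (hyx : ∀ i ∈ F, y i ≤ 1 - x i) (hcap : ∑ i ∈ F, y i ≤ f) :
    ∑ i ∈ F, β i * y i ≤ dualObjective F f β x j := by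
  have hsplit : ∑ i ∈ F, β i * y i = β j * ∑ i ∈ F, y i + ∑ i ∈ F, (β i - β j) * y i := by
    rw [mul_sum, ← sum_add_distrib]
    exact sum_congr rfl fun i _ => by ring
  have hexcess : ∑ i ∈ F, (β i - β j) * y i
      ≤ ∑ i ∈ F.filter (fun i => j < i), (β i - β j) * (1 - x i) := by
    rw [sum_filter]
    refine sum_le_sum fun i hi => ?_
    split_ifs with hji
    · exact mul_le_mul_of_nonneg_left (hyx i hi) (sub_nonneg.2 (hβ hj (hF i hi) hji.le))
    · exact mul_nonpos_of_nonpos_of_nonneg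
        (sub_nonpos.2 (hβ (hF i hi) hj (not_lt.1 hji))) (hy i hi)
  rw [hsplit, dualObjective]
  exact add_le_add (mul_le_mul_of_nonneg_left hcap hβj) hexcess

theorem sum_mul_le_dualVal (hβ0 : β 0 = 0) (hβ : MonotoneOn β (Set.Iic n))
    (hF : ∀ i ∈ F, i ≤ n) (hy : ∀ i ∈ F, 0 ≤ y i) (hyx : ∀ i ∈ F, y i ≤ 1 - x i)
    (hcap : ∑ i ∈ F, y i ≤ f) :
    ∑ i ∈ F, β i * y i ≤ dualVal n F f β x :=
  le_dualVal fun j hj => sum_mul_le_dualObjective hβ hF hj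
    (hβ0 ▸ hβ (Nat.zero_le n) hj (Nat.zero_le j)) hy hyx hcap

theorem dualObjective_eq (hx : ∀ i ∈ F, x i = 0 ∨ x i = 1) (j : ℕ) :
    dualObjective F f β x j
      = β j * (f - #(openAbove F x j)) + ∑ i ∈ openAbove F x j, β i := by
  have hopen : ∑ i ∈ F.filter (fun i => j < i), (β i - β j) * (1 - x i)
      = ∑ i ∈ openAbove F x j, (β i - β j) := by
    rw [openAbove, sum_filter (fun i => x i = 0)]
    refine sum_congr rfl fun i hi => ?_
    rcases hx i (filter_subset _ _ hi) with h | h <;> simp [h]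
  rw [dualObjective, hopen, sum_sub_distrib, sum_const, nsmul_eq_mul]
  ring

theorem card_openAbove_le_succ (j : ℕ) :
    #(openAbove F x j) ≤ #(openAbove F x (j + 1)) + 1 := by
  have hsub : openAbove F x j ⊆ insert (j + 1) (openAbove F x (j + 1)) := by
    intro i hi
    simp only [openAbove, mem_filter, mem_insert] at hi ⊢
    obtain ⟨⟨hiF, hji⟩, hxi⟩ := hi
    rcases (show i = j + 1 ∨ j + 1 < i by omega) with h | h
    · exact Or.inl h
    · exact Or.inr ⟨⟨hiF, h⟩, hxi⟩
  exact (card_le_card hsub).trans (card_insert_le _ _)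

theorem exists_threshold (hβ0 : β 0 = 0) (hF : ∀ i ∈ F, i ≤ n) (x : ℕ → ℝ) (f : ℕ) :
    ∃ j ≤ n, #(openAbove F x j) ≤ f ∧ β j * (f - #(openAbove F x j)) = 0 := by
  have hn : #(openAbove F x n) ≤ f := by
    have : openAbove F x n = ∅ := by
      ext i
      simp only [openAbove, mem_filter, notMem_empty, iff_false]
      exact fun ⟨⟨hi, hni⟩, _⟩ => absurd hni (not_lt.2 (hF i hi))
    simp [this]
  have hex : ∃ j, #(openAbove F x j) ≤ f := ⟨n, hn⟩
  refine ⟨Nat.find hex, Nat.find_min' hex hn, Nat.find_spec hex, ?_⟩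
  rcases hj : Nat.find hex with _ | j
  · rw [hβ0, zero_mul]
  · have hbelow : f < #(openAbove F x j) := not_le.1 (Nat.find_min hex (by omega))
    have hfull : #(openAbove F x (j + 1)) = f := by
      have := card_openAbove_le_succ (F := F) (x := x) j
      have := hj ▸ Nat.find_spec hex
      omega
    rw [hfull, sub_self, mul_zero]

theorem exists_subset_sum_eq_dualVal (hβ0 : β 0 = 0) (hβ : MonotoneOn β (Set.Iic n))
    (hF : ∀ i ∈ F, i ≤ n) (hx : ∀ i ∈ F, x i = 0 ∨ x i = 1) :
    ∃ T ⊆ F, (∀ i ∈ T, x i = 0) ∧ #T ≤ f ∧ ∑ i ∈ T, β i = dualVal n F f β x := by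
  obtain ⟨j, hj, hcard, hslack⟩ := exists_threshold hβ0 hF x f
  have hTF : openAbove F x j ⊆ F := (filter_subset _ _).trans (filter_subset _ _)
  have hTx : ∀ i ∈ openAbove F x j, x i = 0 := fun i hi => (mem_filter.1 hi).2
  refine ⟨openAbove F x j, hTF, hTx, hcard, le_antisymm ?_ ?_⟩
  · rw [← sum_mul_indicator_one hTF]
    refine sum_mul_le_dualVal hβ0 hβ hF (fun i _ => Set.indicator_nonneg (by simp) i)
      (fun i hi => indicator_one_le_one_sub hTx ((hx i hi).elim (·.trans_le zero_le_one) le_of_eq))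
      ?_
    rw [sum_indicator_subset _ hTF]
    simpa using hcard
  · calc dualVal n F f β x ≤ dualObjective F f β x j := dualVal_le_dualObjective hj
      _ = ∑ i ∈ openAbove F x j, β i := by rw [dualObjective_eq hx, hslack, zero_add]

end Group

def followerValues (n kf : ℕ) (F : Fin kf → Finset ℕ) (f : Fin kf → ℕ) (β x : ℕ → ℝ) :
    Set ℝ :=
  {v : ℝ | ∃ y : ℕ → ℝ,
    (∀ i, y i = 0 ∨ y i = 1) ∧
    (∀ i, y i ≤ 1 - x i) ∧
    (∀ k : Fin kf, ∑ i ∈ F k, y i ≤ (f k : ℝ)) ∧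
    v = ∑ i ∈ Icc 1 n, β i * y i}

section Partition

variable {n kf : ℕ} {F : Fin kf → Finset ℕ} {f : Fin kf → ℕ} {β x : ℕ → ℝ}

theorem sum_Icc_eq_sum_sum (hFsub : ∀ k, F k ⊆ Icc 1 n)
    (hFdisj : ∀ k k', k ≠ k' → Disjoint (F k) (F k'))
    (hFcover : ∀ i ∈ Icc 1 n, ∃ k, i ∈ F k) (g : ℕ → ℝ) :
    ∑ i ∈ Icc 1 n, g i = ∑ k, ∑ i ∈ F k, g i := by
  have hIcc : Icc 1 n = univ.biUnion F := by
    ext i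
    simp only [mem_biUnion, mem_univ, true_and]
    exact ⟨hFcover i, fun ⟨k, hk⟩ => hFsub k hk⟩
  rw [hIcc, sum_biUnion fun k _ k' _ => hFdisj k k']

theorem sum_dualVal_mem_followerValues (hβ0 : β 0 = 0) (hβ : MonotoneOn β (Set.Iic n))
    (hx : ∀ i, x i = 0 ∨ x i = 1) (hFsub : ∀ k, F k ⊆ Icc 1 n)
    (hFdisj : ∀ k k', k ≠ k' → Disjoint (F k) (F k'))
    (hFcover : ∀ i ∈ Icc 1 n, ∃ k, i ∈ F k) :
    ∑ k, dualVal n (F k) (f k) β x ∈ followerValues n kf F f β x := by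
  classical
  choose T hTF hTx hTcard hTval using fun k =>
    exists_subset_sum_eq_dualVal (f := f k) hβ0 hβ (fun i hi => (mem_Icc.1 (hFsub k hi)).2)
      (fun i _ => hx i)
  set U := univ.biUnion T
  have hU : ∀ k, ∀ i ∈ F k,
      (U : Set ℕ).indicator 1 i = (T k : Set ℕ).indicator (1 : ℕ → ℝ) i := fun k i hi => by
    simp only [U, Set.indicator_apply, mem_coe, mem_biUnion_univ_iff_of_disjoint hFdisj hTF hi]
  have hUx : ∀ i ∈ (U : Set ℕ), x i = 0 := fun i hi => by
    obtain ⟨k, -, hik⟩ := mem_biUnion.1 hi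
    exact hTx k i hik
  refine ⟨(U : Set ℕ).indicator 1, fun i => Set.indicator_eq_zero_or_self _ _ i,
    fun i => indicator_one_le_one_sub hUx ((hx i).elim (·.trans_le zero_le_one) le_of_eq),
    fun k => ?_, ?_⟩
  · rw [sum_congr rfl (hU k), sum_indicator_subset _ (hTF k)]
    simpa using hTcard k
  · rw [sum_Icc_eq_sum_sum hFsub hFdisj hFcover]
    refine sum_congr rfl fun k _ => ?_
    rw [← hTval k, ← sum_mul_indicator_one (hTF k)]
    exact sum_congr rfl fun i hi => by rw [hU k i hi]

theorem sum_dualVal_mem_upperBounds_followerValues (hβ0 : β 0 = 0)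
    (hβ : MonotoneOn β (Set.Iic n)) (hFsub : ∀ k, F k ⊆ Icc 1 n)
    (hFdisj : ∀ k k', k ≠ k' → Disjoint (F k) (F k'))
    (hFcover : ∀ i ∈ Icc 1 n, ∃ k, i ∈ F k) :
    ∑ k, dualVal n (F k) (f k) β x ∈ upperBounds (followerValues n kf F f β x) := by
  rintro v ⟨y, hy, hyx, hcap, rfl⟩
  have hy0 : ∀ i, 0 ≤ y i := fun i => by rcases hy i with h | h <;> simp [h]
  rw [sum_Icc_eq_sum_sum hFsub hFdisj hFcover]
  exact sum_le_sum fun k _ => sum_mul_le_dualVal hβ0 hβ (fun i hi => (mem_Icc.1 (hFsub k hi)).2)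
    (fun i _ => hy0 i) (fun i _ => hyx i) (hcap k)

theorem followerVal_eq_sum_dualVal (hβ0 : β 0 = 0) (hβ : MonotoneOn β (Set.Iic n))
    (hx : ∀ i, x i = 0 ∨ x i = 1) (hFsub : ∀ k, F k ⊆ Icc 1 n)
    (hFdisj : ∀ k k', k ≠ k' → Disjoint (F k) (F k'))
    (hFcover : ∀ i ∈ Icc 1 n, ∃ k, i ∈ F k) :
    followerVal n kf F f β x = ∑ k, dualVal n (F k) (f k) β x :=
  IsGreatest.csSup_eq ⟨sum_dualVal_mem_followerValues hβ0 hβ hx hFsub hFdisj hFcover,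
    sum_dualVal_mem_upperBounds_followerValues hβ0 hβ hFsub hFdisj hFcover⟩

end Partition

theorem pmi_dual_reformulation_general (n kl kf : ℕ) (β : ℕ → ℝ)
    (hβ0 : β 0 = 0)
    (hβmono : ∀ i j : ℕ, i ≤ j → j ≤ n → β i ≤ β j)
    (L : Fin kl → Finset ℕ) (l : Fin kl → ℕ)
    (F : Fin kf → Finset ℕ) (f : Fin kf → ℕ)
    (hFsub : ∀ k, F k ⊆ Finset.Icc 1 n)
    (hFdisj : ∀ k k', k ≠ k' → Disjoint (F k) (F k'))
    (hFcover : ∀ i ∈ Finset.Icc 1 n, ∃ k, i ∈ F k) :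
    sInf {v : ℝ | ∃ x : ℕ → ℝ, leaderFeas kl L l x ∧ v = followerVal n kf F f β x}
      = sInf {v : ℝ | ∃ x : ℕ → ℝ, leaderFeas kl L l x ∧
          v = ∑ k : Fin kf, dualVal n (F k) (f k) β x} := by
  have hβ : MonotoneOn β (Set.Iic n) := fun i _ j hj hij => hβmono i j hij hj
  congr 1
  ext v
  refine exists_congr fun x => and_congr_right fun hx => ?_
  rw [followerVal_eq_sum_dualVal hβ0 hβ hx.1 hFsub hFdisj hFcover]

/-- Theorem 2: the dual reformulation of the partition matroid
interdiction problem. -/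
theorem pmi_dual_reformulation (n kl kf : ℕ) (β : ℕ → ℝ)
    (hβ0 : β 0 = 0)
    (hβmono : ∀ i j : ℕ, i ≤ j → j ≤ n → β i ≤ β j)
    (L : Fin kl → Finset ℕ) (l : Fin kl → ℕ)
    (hLsub : ∀ k, L k ⊆ Finset.Icc 1 n)
    (hLdisj : ∀ k k', k ≠ k' → Disjoint (L k) (L k'))
    (hLcover : ∀ i ∈ Finset.Icc 1 n, ∃ k, i ∈ L k)
    (F : Fin kf → Finset ℕ) (f : Fin kf → ℕ)
    (hFsub : ∀ k, F k ⊆ Finset.Icc 1 n)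
    (hFdisj : ∀ k k', k ≠ k' → Disjoint (F k) (F k'))
    (hFcover : ∀ i ∈ Finset.Icc 1 n, ∃ k, i ∈ F k) :
    sInf {v : ℝ | ∃ x : ℕ → ℝ, leaderFeas kl L l x ∧ v = followerVal n kf F f β x}
      = sInf {v : ℝ | ∃ x : ℕ → ℝ, leaderFeas kl L l x ∧
          v = ∑ k : Fin kf, dualVal n (F k) (f k) β x} :=
  pmi_dual_reformulation_general n kl kf β hβ0 hβmono L l F f hFsub hFdisj hFcover
end

section
/- Let F ⊆ {1,…,n}, f ∈ ℤ_+, x ∈ {0,1}^n, and let β ∈ ℝ_+^n satisfy β_1 ≤ … ≤ β_n with β_0 := 0. Then max{ Σ_{i∈F} β_i y_i : y ∈ {0,1}^F, y_i ≤ 1 − x_i for all i ∈ F, Σ_{i∈F} y_i ≤ f } = min_{j ∈ {0,…,n}} ( β_j f + Σ_{i ∈ F, i > j} (β_i − β_j)(1 − x_i) ). -/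
/-!
Weak duality: splitting `∑ β_i y_i = β_j ∑ y_i + ∑ (β_i - β_j) y_i`, the first part is at most
`β_j f` and, since `β` is sorted, the second is at most the sum of `(β_i - β_j)(1 - x_i)` over
`i > j`. Strong duality: let `A` be the unblocked elements of `F` and choose the smallest level `j`
with at most `f` elements of `A` above it. Selecting exactly those elements is feasible, and its
value equals the dual objective at `j`, because either `j = 0` (so `β_j = 0`) or exactly `f`
elements are selected.
-/

/-- The optimal value of the follower's subproblem restricted to one group `F`
with capacity `f`. -/
noncomputable def groupVal (F : Finset ℕ) (f : ℕ) (β : ℕ → ℝ) (x : ℕ → ℝ) : ℝ :=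
  sSup {v : ℝ | ∃ y : ℕ → ℝ,
    (∀ i, y i = 0 ∨ y i = 1) ∧
    (∀ i ∈ F, y i ≤ 1 - x i) ∧
    (∑ i ∈ F, y i ≤ (f : ℝ)) ∧
    v = ∑ i ∈ F, β i * y i}

open Finset

theorem sum_mul_le_mul_add_sum_filter {ι : Type*} {F : Finset ι} (p : ι → Prop) [DecidablePred p]
    {β y u : ι → ℝ} {c b : ℝ} (hc : 0 ≤ c) (hy0 : ∀ i ∈ F, 0 ≤ y i)
    (hyu : ∀ i ∈ F, y i ≤ u i) (hsum : ∑ i ∈ F, y i ≤ b)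
    (hp : ∀ i ∈ F, p i → c ≤ β i) (hnp : ∀ i ∈ F, ¬ p i → β i ≤ c) :
    ∑ i ∈ F, β i * y i ≤ c * b + ∑ i ∈ F.filter p, (β i - c) * u i := by
  have hsplit : ∑ i ∈ F, β i * y i = c * ∑ i ∈ F, y i
      + (∑ i ∈ F.filter p, (β i - c) * y i + ∑ i ∈ F.filter (¬ p ·), (β i - c) * y i) := by
    rw [sum_filter_add_sum_filter_not, mul_sum, ← sum_add_distrib]
    exact sum_congr rfl fun i _ => by ring
  have habove : ∑ i ∈ F.filter p, (β i - c) * y i ≤ ∑ i ∈ F.filter p, (β i - c) * u i := by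
    refine sum_le_sum fun i hi => ?_
    obtain ⟨hiF, hpi⟩ := mem_filter.mp hi
    exact mul_le_mul_of_nonneg_left (hyu i hiF) (sub_nonneg.mpr (hp i hiF hpi))
  have hbelow : ∑ i ∈ F.filter (¬ p ·), (β i - c) * y i ≤ 0 := by
    refine sum_nonpos fun i hi => ?_
    obtain ⟨hiF, hpi⟩ := mem_filter.mp hi
    exact mul_nonpos_of_nonpos_of_nonneg (sub_nonpos.mpr (hnp i hiF hpi)) (hy0 i hiF)
  rw [hsplit]
  gcongr
  linarith

theorem csSup_eq_inf'_of_le_of_mem {α ι : Type*} [ConditionallyCompleteLattice α] {S : Set α}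
    {s : Finset ι} (hs : s.Nonempty) {g : ι → α} (hle : ∀ w ∈ S, ∀ j ∈ s, w ≤ g j)
    {v : α} (hv : v ∈ S) {j : ι} (hj : j ∈ s) (hgv : g j ≤ v) :
    sSup S = s.inf' hs g := by
  have hgreatest : IsGreatest S v := ⟨hv, fun w hw => (hle w hw j hj).trans hgv⟩
  rw [hgreatest.csSup_eq]
  exact le_antisymm (le_inf' hs g fun k hk => hle v hv k hk) ((inf'_le g hj).trans hgv)

theorem exists_level_card_filter_lt (A : Finset ℕ) {n : ℕ} (hA : ∀ i ∈ A, i ≤ n) (f : ℕ) :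
    ∃ j ≤ n, #(A.filter (j < ·)) ≤ f ∧ (j = 0 ∨ #(A.filter (j < ·)) = f) := by
  have hn : #(A.filter (n < ·)) ≤ f := by
    rw [filter_false_of_mem fun i hi => not_lt.mpr (hA i hi), card_empty]
    exact Nat.zero_le f
  have hex : ∃ j, #(A.filter (j < ·)) ≤ f := ⟨n, hn⟩
  refine ⟨Nat.find hex, Nat.find_le hn, Nat.find_spec hex, ?_⟩
  set j := Nat.find hex
  rcases Nat.eq_zero_or_pos j with hj0 | hjpos
  · exact Or.inl hj0
  have hprev : f < #(A.filter (j - 1 < ·)) := not_le.mp (Nat.find_min hex (by omega))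
  have hstep : #(A.filter (j - 1 < ·)) ≤ #(A.filter (j < ·)) + 1 := by
    refine (card_le_card fun i hi => ?_).trans (card_insert_le j _)
    simp only [mem_filter, mem_insert] at hi ⊢
    obtain ⟨hiA, hji⟩ := hi
    rcases (show i = j ∨ j < i by omega) with h | h
    exacts [Or.inl h, Or.inr ⟨hiA, h⟩]
  exact Or.inr (le_antisymm (Nat.find_spec hex) (by omega))

section GroupDuality

variable (F : Finset ℕ) (f : ℕ) (β : ℕ → ℝ) (x : ℕ → ℝ)

def groupFeasibleValues : Set ℝ :=
  {v : ℝ | ∃ y : ℕ → ℝ,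
    (∀ i, y i = 0 ∨ y i = 1) ∧
    (∀ i ∈ F, y i ≤ 1 - x i) ∧
    (∑ i ∈ F, y i ≤ (f : ℝ)) ∧
    v = ∑ i ∈ F, β i * y i}

theorem groupVal_eq_sSup : groupVal F f β x = sSup (groupFeasibleValues F f β x) := rfl

def groupDual (j : ℕ) : ℝ :=
  β j * (f : ℝ) + ∑ i ∈ F.filter (j < ·), (β i - β j) * (1 - x i)

variable {F f β x}

theorem le_groupDual {n : ℕ} (hβ0 : β 0 = 0) (hβmono : ∀ i j : ℕ, i ≤ j → j ≤ n → β i ≤ β j)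
    (hF : ∀ i ∈ F, i ≤ n) {v : ℝ} (hv : v ∈ groupFeasibleValues F f β x) {j : ℕ} (hj : j ≤ n) :
    v ≤ groupDual F f β x j := by
  obtain ⟨y, hy01, hyx, hsum, rfl⟩ := hv
  refine sum_mul_le_mul_add_sum_filter _ (hβ0 ▸ hβmono 0 j j.zero_le hj)
    (fun i _ => ?_) hyx hsum (fun i hi hji => hβmono j i hji.le (hF i hi))
    (fun i _ hij => hβmono i j (not_lt.mp hij) hj)
  rcases hy01 i with h | h <;> norm_num [h]

theorem sum_mem_groupFeasibleValues (hx : ∀ i, x i = 0 ∨ x i = 1) {B : Finset ℕ} (hBF : B ⊆ F)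
    (hBx : ∀ i ∈ B, x i = 0) (hB : #B ≤ f) : ∑ i ∈ B, β i ∈ groupFeasibleValues F f β x := by
  refine ⟨fun i => if i ∈ B then 1 else 0, fun i => ?_, fun i _ => ?_, ?_, ?_⟩
  · by_cases hi : i ∈ B <;> simp [hi]
  · by_cases hi : i ∈ B
    · simp [hi, hBx i hi]
    · rcases hx i with h | h <;> simp [hi, h]
  · rw [sum_ite_mem, inter_eq_right.mpr hBF, sum_const, nsmul_one]
    exact_mod_cast hB
  · rw [← sum_subset hBF fun i _ hi => by simp [hi]]
    exact sum_congr rfl fun i hi => by simp [hi]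

theorem groupDual_eq_sum (hβ0 : β 0 = 0) (hx : ∀ i, x i = 0 ∨ x i = 1) {j : ℕ}
    (hj : j = 0 ∨ #((F.filter (x · = 0)).filter (j < ·)) = f) :
    groupDual F f β x j = ∑ i ∈ (F.filter (x · = 0)).filter (j < ·), β i := by
  set B := (F.filter (x · = 0)).filter (j < ·)
  have hBsub : B ⊆ F.filter (j < ·) := fun i hi => by
    simp only [B, mem_filter] at hi ⊢
    exact ⟨hi.1.1, hi.2⟩
  have hblocked : ∀ i ∈ F.filter (j < ·), i ∉ B → (β i - β j) * (1 - x i) = 0 := by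
    intro i hi hiB
    simp only [B, mem_filter] at hi hiB
    rcases hx i with h | h
    · exact absurd ⟨⟨hi.1, h⟩, hi.2⟩ hiB
    · rw [h, sub_self, mul_zero]
  have hfree : ∑ i ∈ B, (β i - β j) * (1 - x i) = ∑ i ∈ B, β i - #B * β j := by
    rw [← nsmul_eq_mul, ← sum_const, ← sum_sub_distrib]
    refine sum_congr rfl fun i hi => ?_
    rw [(mem_filter.mp (mem_filter.mp hi).1).2]
    ring
  have hcap : β j * f = #B * β j := by
    rcases hj with rfl | hcard
    · rw [hβ0, zero_mul, mul_zero]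
    · rw [hcard, mul_comm]
  rw [groupDual, ← sum_subset hBsub hblocked, hfree, hcap]
  ring

end GroupDuality

/-- LP-duality identity for a single group,
`max{∑_{i∈F} β_i y_i : y binary, y ≤ 1 - x on F, ∑_{i∈F} y_i ≤ f}
  = min_{j ∈ {0,…,n}} ( β_j f + ∑_{i ∈ F, i > j} (β_i - β_j)(1 - x_i) )`. -/
theorem group_dual_value (n : ℕ) (β : ℕ → ℝ)
    (hβ0 : β 0 = 0)
    (hβmono : ∀ i j : ℕ, i ≤ j → j ≤ n → β i ≤ β j)
    (F : Finset ℕ) (hF : F ⊆ Finset.Icc 1 n) (f : ℕ)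
    (x : ℕ → ℝ) (hx : ∀ i, x i = 0 ∨ x i = 1) :
    groupVal F f β x
      = Finset.inf' (Finset.range (n + 1)) Finset.nonempty_range_add_one
          (fun j => β j * (f : ℝ)
            + ∑ i ∈ F.filter (fun i => j < i), (β i - β j) * (1 - x i)) := by
  have hFn : ∀ i ∈ F, i ≤ n := fun i hi => (mem_Icc.mp (hF hi)).2
  set A := F.filter (x · = 0)
  obtain ⟨j, hjn, hcard, hj⟩ :=
    exists_level_card_filter_lt A (fun i hi => hFn i (mem_filter.mp hi).1) f
  have hmem : ∑ i ∈ A.filter (j < ·), β i ∈ groupFeasibleValues F f β x :=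
    sum_mem_groupFeasibleValues hx ((filter_subset _ _).trans (filter_subset _ _))
      (fun i hi => (mem_filter.mp (mem_filter.mp hi).1).2) hcard
  rw [groupVal_eq_sSup]
  exact csSup_eq_inf'_of_le_of_mem (g := groupDual F f β x) _
    (fun v hv k hk => le_groupDual hβ0 hβmono hFn hv (Nat.lt_succ_iff.mp (mem_range.mp hk)))
    hmem (mem_range.mpr (Nat.lt_succ_of_le hjn)) (groupDual_eq_sum hβ0 hx hj).le
end

section
/- The leader's objective function ψ(x) := max_{y ∈ I_Y(x)} β^T y is submodular on {0,1}^n: for all x', x'' ∈ {0,1}^n with x' ≤ x'' (componentwise) and every index i ∈ {1,…,n} with x'_i = x''_i = 0, one has ψ(x' + e_i) − ψ(x') ≥ ψ(x'' + e_i) − ψ(x''), where e_i denotes the i-th unit vector. -/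
/-!
Take an optimal follower response `y` to `x'` and `z` to `x'' + eᵢ`. An exchange argument turns
them into a response `y'` to `x' + eᵢ` and `z'` to `x''` with `y' + z' = y + z`, so that
`ψ(x'' + eᵢ) + ψ(x') = βᵀy + βᵀz = βᵀy' + βᵀz' ≤ ψ(x' + eᵢ) + ψ(x'')`. If `yᵢ = 0` take
`y' = y`, `z' = z`. Otherwise move `i` from `y` to `z`; if this overfills the budget of the block
`F_k ∋ i` in `z`, then `z` uses more of `F_k` than `y - eᵢ` does, so some `j ∈ F_k` has
`z_j = 1`, `y_j = 0`, and `j` is moved back from `z` to `y`.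
-/

/-- The leader's objective `ψ(x)`: the follower's optimal value, i.e. the maximum of
`βᵀy` over binary `y ≤ 1 - x` satisfying `∑_{i ∈ F_k} y_i ≤ f_k` for all `k`. -/
noncomputable def psi (n kf : ℕ) (F : Fin kf → Finset ℕ) (f : Fin kf → ℕ)
    (β : ℕ → ℝ) (x : ℕ → ℝ) : ℝ :=
  sSup {v : ℝ | ∃ y : ℕ → ℝ,
    (∀ i, y i = 0 ∨ y i = 1) ∧
    (∀ i, y i ≤ 1 - x i) ∧
    (∀ k : Fin kf, ∑ i ∈ F k, y i ≤ (f k : ℝ)) ∧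
    v = ∑ i ∈ Finset.Icc 1 n, β i * y i}

open Finset Function

theorem Finset.exists_lt_of_sum_lt_sum_add {ι : Type*} [DecidableEq ι] {s : Finset ι}
    {y z : ι → ℝ} {i : ι} {c : ℝ} (hi : i ∈ s) (hzi : z i + c ≤ y i)
    (hsum : ∑ t ∈ s, y t < ∑ t ∈ s, z t + c) : ∃ j ∈ s, y j < z j := by
  by_contra! hzy
  have hrest : ∑ t ∈ s.erase i, z t ≤ ∑ t ∈ s.erase i, y t :=
    sum_le_sum fun t ht => hzy t (mem_of_mem_erase ht)
  rw [← add_sum_erase s y hi, ← add_sum_erase s z hi] at hsum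
  linarith

theorem add_single_le_one {ι : Type*} [DecidableEq ι] {x : ι → ℝ} (hx : ∀ t, x t ≤ 1) {i : ι}
    (hi : x i ≤ 0) (t : ι) : (x + Pi.single i 1 : ι → ℝ) t ≤ 1 := by
  rcases eq_or_ne t i with rfl | ht
  · simpa using hi
  · simpa [ht] using hx t

namespace Psi

variable {ι : Type*} {kf : ℕ} {F : Fin kf → Finset ι} {f : Fin kf → ℕ}

structure IsFollowerFeasible (F : Fin kf → Finset ι) (f : Fin kf → ℕ) (x y : ι → ℝ) : Prop where
  binary : ∀ t, y t = 0 ∨ y t = 1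
  le_one_sub : ∀ t, y t ≤ 1 - x t
  budget : ∀ k, ∑ t ∈ F k, y t ≤ (f k : ℝ)

namespace IsFollowerFeasible

variable {x y : ι → ℝ}

theorem nonneg (h : IsFollowerFeasible F f x y) (t : ι) : 0 ≤ y t := by
  rcases h.binary t with h | h <;> simp [h]

theorem le_zero_of_eq_one (h : IsFollowerFeasible F f x y) {t : ι} (ht : y t = 1) : x t ≤ 0 := by
  linarith [h.le_one_sub t]

theorem of_le_on_support {x' : ι → ℝ} (h : IsFollowerFeasible F f x y) (hx' : ∀ t, x' t ≤ 1)
    (hsupp : ∀ t, y t = 1 → x' t ≤ x t) : IsFollowerFeasible F f x' y where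
  binary := h.binary
  le_one_sub t := by
    rcases h.binary t with ht | ht
    · linarith [hx' t]
    · linarith [h.le_one_sub t, hsupp t ht]
  budget := h.budget

variable [DecidableEq ι] {i : ι}

theorem erase (h : IsFollowerFeasible F f x y) (hyi : y i = 1) :
    IsFollowerFeasible F f x (y - Pi.single i 1) where
  binary t := by
    rcases eq_or_ne t i with rfl | ht
    · simp [hyi]
    · simpa [ht] using h.binary t
  le_one_sub t := by
    rcases eq_or_ne t i with rfl | ht
    · simpa [hyi] using (h.le_zero_of_eq_one hyi).trans zero_le_one
    · simpa [ht] using h.le_one_sub t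
  budget k := by
    simp only [Pi.sub_apply, sum_sub_distrib, sum_pi_single']
    split_ifs <;> linarith [h.budget k]

theorem insert (h : IsFollowerFeasible F f x y) (hyi : y i = 0) (hxi : x i ≤ 0)
    (hslack : ∀ k, i ∈ F k → ∑ t ∈ F k, y t + 1 ≤ f k) :
    IsFollowerFeasible F f x (y + Pi.single i 1) where
  binary t := by
    rcases eq_or_ne t i with rfl | ht
    · simp [hyi]
    · simpa [ht] using h.binary t
  le_one_sub t := by
    rcases eq_or_ne t i with rfl | ht
    · simpa [hyi] using hxi
    · simpa [ht] using h.le_one_sub t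
  budget k := by
    simp only [Pi.add_apply, sum_add_distrib, sum_pi_single']
    split_ifs with hk
    · exact hslack k hk
    · simpa using h.budget k

/-- Disjointness of the blocks makes `F k` the only block meeting `{i, j}`, and there the count
is unchanged. -/
theorem swap (hdisj : Pairwise (Disjoint on F)) (h : IsFollowerFeasible F f x y) {j : ι}
    {k : Fin kf} (hik : i ∈ F k) (hjk : j ∈ F k) (hyi : y i = 1) (hyj : y j = 0) (hxj : x j ≤ 0) :
    IsFollowerFeasible F f x (y - Pi.single i 1 + Pi.single j 1) := by
  have hji : j ≠ i := by rintro rfl; simp [hyi] at hyj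
  refine (h.erase hyi).insert (by simp [hji, hyj]) hxj fun k' hjk' => ?_
  obtain rfl : k' = k := by_contra fun hne => disjoint_left.mp (hdisj hne) hjk' hjk
  simp only [Pi.sub_apply, sum_sub_distrib, sum_pi_single', hik, if_true]
  linarith [h.budget k']

end IsFollowerFeasible

theorem exists_exchange [DecidableEq ι] (hdisj : Pairwise (Disjoint on F))
    {x' x'' y z : ι → ℝ} {i : ι} (hx'' : ∀ t, x'' t ≤ 1) (hle : ∀ t, x' t ≤ x'' t)
    (hi : x'' i = 0) (hy : IsFollowerFeasible F f x' y)
    (hz : IsFollowerFeasible F f (x'' + Pi.single i 1) z) :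
    ∃ y' z', IsFollowerFeasible F f (x' + Pi.single i 1) y' ∧ IsFollowerFeasible F f x'' z' ∧
      y' + z' = y + z := by
  have hx'i : x' i ≤ 0 := hi ▸ hle i
  have hzi : z i = 0 := by
    have := hz.le_one_sub i
    simp only [Pi.add_apply, Pi.single_eq_same, hi] at this
    linarith [hz.nonneg i]
  have hz'' : IsFollowerFeasible F f x'' z :=
    hz.of_le_on_support hx'' fun t _ => by simp [Pi.single_apply]; split_ifs <;> norm_num
  have hy_up : ∀ w, IsFollowerFeasible F f x' w → w i = 0 →
      IsFollowerFeasible F f (x' + Pi.single i 1) w := fun w hw hwi =>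
    hw.of_le_on_support (add_single_le_one (fun t => (hle t).trans (hx'' t)) hx'i) fun t ht => by
      have hti : t ≠ i := by rintro rfl; simp [hwi] at ht
      simp [hti]
  rcases hy.binary i with hyi | hyi
  · exact ⟨y, z, hy_up y hy hyi, hz'', rfl⟩
  by_cases htight : ∃ k, i ∈ F k ∧ (f k : ℝ) < ∑ t ∈ F k, z t + 1
  · obtain ⟨k, hik, hk⟩ := htight
    obtain ⟨j, hjk, hyzj⟩ : ∃ j ∈ F k, y j < z j :=
      exists_lt_of_sum_lt_sum_add (c := 1) hik (by simp [hzi, hyi]) (by linarith [hy.budget k])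
    have hyj : y j = 0 :=
      (hy.binary j).resolve_right fun h => by rcases hz.binary j with h' | h' <;> linarith
    have hzj : z j = 1 := (hz.binary j).resolve_left fun h => by linarith [hy.nonneg j]
    refine ⟨y - Pi.single i 1 + Pi.single j 1, z - Pi.single j 1 + Pi.single i 1, ?_,
      hz''.swap hdisj hjk hik hzj hzi hi.le, by abel⟩
    have hxj : x' j ≤ 0 := (hle j).trans (hz''.le_zero_of_eq_one hzj)
    refine hy_up _ (hy.swap hdisj hik hjk hyi hyj hxj) ?_
    have hji : j ≠ i := by rintro rfl; simp [hzi] at hzj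
    simp [hyi, hji.symm]
  · push Not at htight
    exact ⟨y - Pi.single i 1, z + Pi.single i 1, hy_up _ (hy.erase hyi) (by simp [hyi]),
      hz''.insert hzi hi.le htight, by abel⟩

def followerValues (n kf : ℕ) (F : Fin kf → Finset ℕ) (f : Fin kf → ℕ)
    (β : ℕ → ℝ) (x : ℕ → ℝ) : Set ℝ :=
  {v : ℝ | ∃ y : ℕ → ℝ,
    (∀ i, y i = 0 ∨ y i = 1) ∧
    (∀ i, y i ≤ 1 - x i) ∧
    (∀ k : Fin kf, ∑ i ∈ F k, y i ≤ (f k : ℝ)) ∧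
    v = ∑ i ∈ Finset.Icc 1 n, β i * y i}

theorem followerValues_finite {F : Fin kf → Finset ℕ} (n : ℕ) (β x : ℕ → ℝ) :
    (followerValues n kf F f β x).Finite := by
  classical
  refine (Set.finite_range fun S : (Icc 1 n).powerset => ∑ t ∈ (S : Finset ℕ), β t).subset ?_
  rintro v ⟨y, hy, -, -, rfl⟩
  refine ⟨⟨(Icc 1 n).filter (y · = 1), by simp⟩, ?_⟩
  change ∑ t ∈ (Icc 1 n).filter (y · = 1), β t = _
  rw [sum_filter]
  refine sum_congr rfl fun t _ => ?_
  rcases hy t with h | h <;> simp [h]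

theorem le_psi {F : Fin kf → Finset ℕ} (n : ℕ) (β : ℕ → ℝ) {x y : ℕ → ℝ}
    (h : IsFollowerFeasible F f x y) :
    ∑ t ∈ Icc 1 n, β t * y t ≤ psi n kf F f β x :=
  le_csSup (followerValues_finite n β x).bddAbove ⟨y, h.binary, h.le_one_sub, h.budget, rfl⟩

theorem exists_isFollowerFeasible_psi_eq {F : Fin kf → Finset ℕ} (n : ℕ) (β : ℕ → ℝ) {x : ℕ → ℝ}
    (hx : ∀ t, x t ≤ 1) :
    ∃ y, IsFollowerFeasible F f x y ∧ ∑ t ∈ Icc 1 n, β t * y t = psi n kf F f β x := by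
  have hzero : (0 : ℝ) ∈ followerValues n kf F f β x :=
    ⟨0, fun _ => Or.inl rfl, fun t => by simpa using hx t, fun _ => by simp, by simp⟩
  obtain ⟨y, hbin, hle, hbudget, hv⟩ :=
    Set.Nonempty.csSup_mem ⟨0, hzero⟩ (followerValues_finite n β x)
  exact ⟨y, ⟨hbin, hle, hbudget⟩, hv.symm⟩

end Psi

open Psi in
theorem psi_submodular_general (n kf : ℕ) (β : ℕ → ℝ)
    (F : Fin kf → Finset ℕ) (f : Fin kf → ℕ)
    (hFdisj : ∀ k k', k ≠ k' → Disjoint (F k) (F k'))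
    (x' x'' : ℕ → ℝ)
    (hx'' : ∀ i, x'' i = 0 ∨ x'' i = 1)
    (hle : ∀ i, x' i ≤ x'' i)
    (i : ℕ) (hi'' : x'' i = 0) :
    psi n kf F f β (fun t => x'' t + (if t = i then 1 else 0))
      - psi n kf F f β x''
    ≤ psi n kf F f β (fun t => x' t + (if t = i then 1 else 0))
      - psi n kf F f β x' := by
  have hsingle : ∀ x : ℕ → ℝ, (fun t => x t + if t = i then 1 else 0) = x + Pi.single i 1 :=
    fun x => funext fun t => by simp [Pi.single_apply]
  rw [hsingle, hsingle]
  have hx''_le : ∀ t, x'' t ≤ 1 := fun t => by rcases hx'' t with h | h <;> simp [h]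
  obtain ⟨y, hy, hyv⟩ := exists_isFollowerFeasible_psi_eq (F := F) (f := f) n β
    fun t => (hle t).trans (hx''_le t)
  obtain ⟨z, hz, hzv⟩ := exists_isFollowerFeasible_psi_eq (F := F) (f := f) n β
    (add_single_le_one hx''_le hi''.le)
  obtain ⟨y', z', hy', hz', hyz⟩ :=
    exists_exchange (fun k k' hne => hFdisj k k' hne) hx''_le hle hi'' hy hz
  have hvalue : ∑ t ∈ Icc 1 n, β t * y' t + ∑ t ∈ Icc 1 n, β t * z' t
      = ∑ t ∈ Icc 1 n, β t * y t + ∑ t ∈ Icc 1 n, β t * z t := by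
    simp only [← sum_add_distrib, ← mul_add, ← Pi.add_apply, hyz]
  linarith [le_psi n β hy', le_psi n β hz']

/-- Proposition 1(ii): `ψ` is submodular on `{0,1}^n`:
for `x' ≤ x''` and an index `i ∈ {1,…,n}` with `x'_i = x''_i = 0`,
`ψ(x' + e_i) - ψ(x') ≥ ψ(x'' + e_i) - ψ(x'')`. -/
theorem psi_submodular (n kf : ℕ) (β : ℕ → ℝ)
    (hβ : ∀ i, 0 ≤ β i)
    (F : Fin kf → Finset ℕ) (f : Fin kf → ℕ)
    (hFsub : ∀ k, F k ⊆ Finset.Icc 1 n)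
    (hFdisj : ∀ k k', k ≠ k' → Disjoint (F k) (F k'))
    (hFcover : ∀ i ∈ Finset.Icc 1 n, ∃ k, i ∈ F k)
    (x' x'' : ℕ → ℝ)
    (hx' : ∀ i, x' i = 0 ∨ x' i = 1) (hx'' : ∀ i, x'' i = 0 ∨ x'' i = 1)
    (hle : ∀ i, x' i ≤ x'' i)
    (i : ℕ) (hi : i ∈ Finset.Icc 1 n) (hi' : x' i = 0) (hi'' : x'' i = 0) :
    psi n kf F f β (fun t => x'' t + (if t = i then 1 else 0))
      - psi n kf F f β x''
    ≤ psi n kf F f β (fun t => x' t + (if t = i then 1 else 0))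
      - psi n kf F f β x' :=
  psi_submodular_general n kf β F f hFdisj x' x'' hx'' hle i hi''
end

section
/- Let β ∈ ℝ_+^n satisfy 0 ≤ β_1 < β_2 < … < β_n (distinct weights, Assumption A1), set β_0 := 0, let f ∈ ℤ_+ with f ≥ 1, and define ψ_f(x) = max{ β^T y : y ∈ {0,1}^n, y ≤ 1 − x, Σ_{i=1}^n y_i ≤ f } for x ∈ {0,1}^n. For x ∈ {0,1}^n and i with x_i = 0, let j(x,f) denote the f-th largest index in { t : x_t = 0 } (equal to 0 if fewer than f such indices exist). Then ψ_f(x + e_i) − ψ_f(x) = β_{j(x,f+1)} − β_i if i ≥ j(x,f), and ψ_f(x + e_i) − ψ_f(x) = 0 otherwise. -/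
/-!
The value `ψ_f(x)` is attained greedily: the `f` largest free indices (all of them when there
are fewer) form an optimal selection, by an exchange argument, since `β` is nonnegative and
increasing on `{1,…,n}`. Blocking a free `i` below `j(x,f)` leaves that selection optimal;
blocking one of the selected elements replaces it by the next free index `j(x,f+1)`, whose
weight is `β_0 = 0` when there is none.
-/

/-- The follower's optimal value under a single capacity constraint `f`. -/
noncomputable def psiSingle (n f : ℕ) (β : ℕ → ℝ) (x : ℕ → ℝ) : ℝ :=
  sSup {v : ℝ | ∃ y : ℕ → ℝ,
    (∀ i, y i = 0 ∨ y i = 1) ∧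
    (∀ i, y i ≤ 1 - x i) ∧
    (∑ i ∈ Finset.Icc 1 n, y i ≤ (f : ℝ)) ∧
    v = ∑ i ∈ Finset.Icc 1 n, β i * y i}

/-- The set `S(x)` of non-interdicted elements of `{1,…,n}`. -/
noncomputable def freeSet (n : ℕ) (x : ℕ → ℝ) : Finset ℕ :=
  (Finset.Icc 1 n).filter (fun t => x t = 0)

open Finset

lemma sum_le_sum_of_card_le_of_forall_le {ι M : Type*} [AddCommMonoid M] [LinearOrder M]
    [IsOrderedAddMonoid M] {B C : Finset ι} {g : ι → M} (hcard : #B ≤ #C)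
    (hBC : ∀ b ∈ B, ∀ c ∈ C, g b ≤ g c) (hC : ∀ c ∈ C, 0 ≤ g c) :
    ∑ b ∈ B, g b ≤ ∑ c ∈ C, g c := by
  rcases C.eq_empty_or_nonempty with rfl | hne
  · simp_all
  obtain ⟨m, hm, hmin⟩ := C.exists_min_image g hne
  calc ∑ b ∈ B, g b ≤ #B • g m := B.sum_le_card_nsmul g _ fun b hb => hBC b hb m hm
    _ ≤ #C • g m := nsmul_le_nsmul_left (hC m hm) hcard
    _ ≤ ∑ c ∈ C, g c := C.card_nsmul_le_sum g _ hmin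

lemma sum_le_sum_filter_le {α M : Type*} [LinearOrder α] [AddCommMonoid M] [LinearOrder M]
    [IsOrderedAddMonoid M] {S A : Finset α} {g : α → M} {j : α}
    (hmono : MonotoneOn g S) (hnn : ∀ t ∈ S, 0 ≤ g t) (hAS : A ⊆ S)
    (hcard : #A ≤ #(S.filter (j ≤ ·))) :
    ∑ t ∈ A, g t ≤ ∑ t ∈ S.filter (j ≤ ·), g t := by
  set T := S.filter (j ≤ ·)
  rw [← sum_inter_add_sum_sdiff A T, ← sum_inter_add_sum_sdiff T A, inter_comm T A]
  refine add_le_add le_rfl (sum_le_sum_of_card_le_of_forall_le ?_ ?_ ?_)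
  · have := card_sdiff_add_card_inter A T
    have := card_sdiff_add_card_inter T A
    rw [inter_comm T A] at this
    omega
  · intro b hb c hc
    simp only [T, mem_sdiff, mem_filter, not_and, not_le] at hb hc
    exact hmono (hAS hb.1) hc.1.1 ((hb.2 (hAS hb.1)).le.trans hc.1.2)
  · exact fun c hc => hnn c (filter_subset _ _ (sdiff_subset hc))

lemma lt_of_card_filter_le_lt {α : Type*} [LinearOrder α] {S : Finset α} {a b : α}
    (h : #(S.filter (a ≤ ·)) < #(S.filter (b ≤ ·))) : b < a := by
  by_contra! hab
  refine h.not_ge (card_le_card fun t ht => ?_)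
  simp only [mem_filter] at ht ⊢
  exact ⟨ht.1, hab.trans ht.2⟩

lemma filter_le_eq_insert {α : Type*} [LinearOrder α] {S : Finset α} {a b : α} (ha : a ∈ S)
    (h : #(S.filter (a ≤ ·)) = #(S.filter (b ≤ ·)) + 1) :
    S.filter (a ≤ ·) = insert a (S.filter (b ≤ ·)) := by
  have hab : a < b := lt_of_card_filter_le_lt (S := S) (by omega)
  refine (eq_of_subset_of_card_le (insert_subset (mem_filter.mpr ⟨ha, le_rfl⟩) ?_) ?_).symm
  · exact fun t ht => mem_filter.mpr ⟨(mem_filter.mp ht).1, hab.le.trans (mem_filter.mp ht).2⟩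
  · rw [card_insert_of_notMem (by simp [hab])]
    exact h.le

lemma sum_mul_eq_sum_filter {ι : Type*} {s : Finset ι} {g y : ι → ℝ}
    (hy : ∀ t, y t = 0 ∨ y t = 1) :
    ∑ t ∈ s, g t * y t = ∑ t ∈ s.filter (y · = 1), g t := by
  rw [sum_filter]
  refine sum_congr rfl fun t _ => ?_
  rcases hy t with h | h <;> simp [h]

section

variable {n f : ℕ} {β x : ℕ → ℝ}

lemma freeSet_add_single (hx : ∀ t, x t = 0 ∨ x t = 1) (i : ℕ) :
    freeSet n (fun t => x t + if t = i then 1 else 0) = (freeSet n x).erase i := by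
  ext t
  simp only [freeSet, mem_filter, mem_erase]
  by_cases h : t = i
  · subst h
    rcases hx t with h' | h' <;> norm_num [h']
  · simp [h, and_comm]

lemma add_single_eq_zero_or_one (hx : ∀ t, x t = 0 ∨ x t = 1) {i : ℕ} (hxi : x i = 0) (t : ℕ) :
    x t + (if t = i then 1 else 0) = 0 ∨ x t + (if t = i then 1 else 0) = 1 := by
  by_cases h : t = i
  · simp [h, hxi]
  · simpa [h] using hx t

lemma psiSingle_eq_of_forall_le (hx : ∀ t, x t = 0 ∨ x t = 1) {T : Finset ℕ}
    (hT : T ⊆ freeSet n x) (hTf : #T ≤ f)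
    (hmax : ∀ A ⊆ freeSet n x, #A ≤ f → ∑ t ∈ A, β t ≤ ∑ t ∈ T, β t) :
    psiSingle n f β x = ∑ t ∈ T, β t := by
  have hTIcc : T ⊆ Icc 1 n := hT.trans (filter_subset _ _)
  refine IsGreatest.csSup_eq ⟨⟨fun t => if t ∈ T then 1 else 0, ?_, ?_, ?_, ?_⟩, ?_⟩
  · intro t
    by_cases ht : t ∈ T <;> simp [ht]
  · intro t
    by_cases ht : t ∈ T
    · simp [ht, (mem_filter.mp (hT ht)).2]
    · rcases hx t with h | h <;> simp [ht, h]
  · simpa [sum_ite_mem, inter_eq_right.mpr hTIcc] using hTf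
  · simp [sum_ite_mem, inter_eq_right.mpr hTIcc]
  · rintro v ⟨y, hy, hyx, hysum, rfl⟩
    -- `y` is the indicator of `A`
    set A := (Icc 1 n).filter (y · = 1)
    have hA : A ⊆ freeSet n x := fun t ht => by
      simp only [A, mem_filter] at ht
      have hxt := hyx t
      rw [ht.2] at hxt
      exact mem_filter.mpr ⟨ht.1, (hx t).resolve_right fun h => by linarith⟩
    have hcard : ∑ t ∈ Icc 1 n, y t = #A := by
      simpa using sum_mul_eq_sum_filter (s := Icc 1 n) (g := fun _ => (1 : ℝ)) hy
    rw [sum_mul_eq_sum_filter hy]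
    exact hmax A hA (by exact_mod_cast hcard ▸ hysum)

variable (hβmono : MonotoneOn β (Icc 1 n)) (hβnn : ∀ t ∈ Icc 1 n, 0 ≤ β t)
  (hx : ∀ t, x t = 0 ∨ x t = 1)
include hβmono hβnn hx

lemma psiSingle_eq_sum_filter {j : ℕ} (hcard : #((freeSet n x).filter (j ≤ ·)) = f) :
    psiSingle n f β x = ∑ t ∈ (freeSet n x).filter (j ≤ ·), β t :=
  psiSingle_eq_of_forall_le hx (filter_subset _ _) hcard.le fun _ hA hAf =>
    sum_le_sum_filter_le (hβmono.mono (coe_subset.mpr (filter_subset _ _)))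
      (fun t ht => hβnn t (filter_subset _ _ ht)) hA (hcard ▸ hAf)

omit hβmono in
lemma psiSingle_eq_sum_freeSet (hcard : #(freeSet n x) ≤ f) :
    psiSingle n f β x = ∑ t ∈ freeSet n x, β t :=
  psiSingle_eq_of_forall_le hx subset_rfl hcard fun _ hA _ =>
    sum_le_sum_of_subset_of_nonneg hA fun t ht _ => hβnn t (filter_subset _ _ ht)

lemma psiSingle_add_single_sub_of_card_filter {i j₁ j₂ : ℕ} (hiS : i ∈ freeSet n x)
    (hj₂S : j₂ ∈ freeSet n x) (hj₁card : #((freeSet n x).filter (j₁ ≤ ·)) = f)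
    (hj₂card : #((freeSet n x).filter (j₂ ≤ ·)) = f + 1) :
    psiSingle n f β (fun t => x t + if t = i then 1 else 0) - psiSingle n f β x
      = if j₁ ≤ i then β j₂ - β i else 0 := by
  have hx' := add_single_eq_zero_or_one hx (mem_filter.mp hiS).2
  have hS' := freeSet_add_single (n := n) hx i
  have hins := filter_le_eq_insert hj₂S (hj₂card.trans (congrArg (· + 1) hj₁card).symm)
  have hj₂lt : j₂ < j₁ := lt_of_card_filter_le_lt (by rw [hj₁card, hj₂card]; omega)
  rw [psiSingle_eq_sum_filter hβmono hβnn hx hj₁card]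
  split_ifs with hi₁
  · have hiT₂ : i ∈ (freeSet n x).filter (j₂ ≤ ·) := mem_filter.mpr ⟨hiS, by omega⟩
    rw [psiSingle_eq_sum_filter (j := j₂) hβmono hβnn hx'
      (by rw [hS', filter_erase, card_erase_of_mem hiT₂, hj₂card]; rfl),
      hS', filter_erase, sum_erase_eq_sub hiT₂, hins,
      sum_insert fun h => (mem_filter.mp h).2.not_gt hj₂lt]
    ring
  · have hiT₁ : i ∉ (freeSet n x).filter (j₁ ≤ ·) := fun h => hi₁ (mem_filter.mp h).2
    rw [psiSingle_eq_sum_filter (j := j₁) hβmono hβnn hx'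
      (by rw [hS', filter_erase, erase_eq_of_notMem hiT₁, hj₁card]),
      hS', filter_erase, erase_eq_of_notMem hiT₁, sub_self]

omit hβmono in
lemma psiSingle_add_single_sub_of_card_le {i : ℕ} (hiS : i ∈ freeSet n x)
    (hcard : #(freeSet n x) ≤ f) :
    psiSingle n f β (fun t => x t + if t = i then 1 else 0) - psiSingle n f β x = -β i := by
  have hS' := freeSet_add_single (n := n) hx i
  rw [psiSingle_eq_sum_freeSet hβnn hx hcard, psiSingle_eq_sum_freeSet hβnn
    (add_single_eq_zero_or_one hx (mem_filter.mp hiS).2) (hS' ▸ card_erase_le.trans hcard),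
    hS', sum_erase_eq_sub hiS]
  ring

end

theorem greedy_marginal_value_general (n : ℕ) (β : ℕ → ℝ)
    (hβ0 : β 0 = 0) (hβ1 : 0 ≤ β 1)
    (hβstrict : ∀ i j : ℕ, 1 ≤ i → i < j → j ≤ n → β i < β j)
    (f : ℕ)
    (x : ℕ → ℝ) (hx : ∀ i, x i = 0 ∨ x i = 1)
    (i : ℕ) (hi : i ∈ Finset.Icc 1 n) (hxi : x i = 0)
    (j₁ : ℕ)
    (hj₁ : f ≤ (freeSet n x).card →
      j₁ ∈ freeSet n x ∧ ((freeSet n x).filter (fun t => j₁ ≤ t)).card = f)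
    (hj₁0 : (freeSet n x).card < f → j₁ = 0)
    (j₂ : ℕ)
    (hj₂ : f + 1 ≤ (freeSet n x).card →
      j₂ ∈ freeSet n x ∧ ((freeSet n x).filter (fun t => j₂ ≤ t)).card = f + 1)
    (hj₂0 : (freeSet n x).card < f + 1 → j₂ = 0) :
    psiSingle n f β (fun t => x t + (if t = i then 1 else 0)) - psiSingle n f β x
      = if j₁ ≤ i then β j₂ - β i else 0 := by
  have hβmono : MonotoneOn β (Finset.Icc 1 n) := StrictMonoOn.monotoneOn
    fun a ha b hb hab => hβstrict a b (mem_Icc.mp ha).1 hab (mem_Icc.mp hb).2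
  have hβnn : ∀ t ∈ Finset.Icc 1 n, 0 ≤ β t := fun t ht =>
    have ⟨h1t, htn⟩ := mem_Icc.mp ht
    hβ1.trans (hβmono (mem_Icc.mpr ⟨le_rfl, h1t.trans htn⟩) ht h1t)
  have hiS : i ∈ freeSet n x := mem_filter.mpr ⟨hi, hxi⟩
  rcases lt_or_ge f #(freeSet n x) with hlarge | hsmall
  · exact psiSingle_add_single_sub_of_card_filter hβmono hβnn hx hiS (hj₂ hlarge).1
      (hj₁ hlarge.le).2 (hj₂ hlarge).2
  · have hj₁i : j₁ ≤ i := by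
      rcases hsmall.lt_or_eq with hlt | heq
      · exact (hj₁0 hlt).trans_le (Nat.zero_le i)
      · exact filter_card_eq ((hj₁ heq.ge).2.trans heq.symm) i hiS
    rw [psiSingle_add_single_sub_of_card_le hβnn hx hiS hsmall, if_pos hj₁i,
      hj₂0 (Nat.lt_succ_of_le hsmall), hβ0, zero_sub]

/-- marginal change of the follower's optimal value when the leader
additionally blocks an unblocked element `i`. Here `j₁ = j(x,f)` and
`j₂ = j(x,f+1)` are the `f`-th and `(f+1)`-st largest indices of
`S(x) = {t : x_t = 0}` (with value `0` when too few such indices exist), the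
weights satisfy Assumption A1 (`0 ≤ β_1 < β_2 < ⋯ < β_n`, `β_0 = 0`), and
`ψ_f(x + e_i) - ψ_f(x) = β_{j(x,f+1)} - β_i` if `i ≥ j(x,f)`, and `= 0` otherwise. -/
theorem greedy_marginal_value (n : ℕ) (β : ℕ → ℝ)
    (hβ0 : β 0 = 0) (hβ1 : 0 ≤ β 1)
    (hβstrict : ∀ i j : ℕ, 1 ≤ i → i < j → j ≤ n → β i < β j)
    (f : ℕ) (hf : 1 ≤ f)
    (x : ℕ → ℝ) (hx : ∀ i, x i = 0 ∨ x i = 1)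
    (i : ℕ) (hi : i ∈ Finset.Icc 1 n) (hxi : x i = 0)
    (j₁ : ℕ)
    (hj₁ : f ≤ (freeSet n x).card →
      j₁ ∈ freeSet n x ∧ ((freeSet n x).filter (fun t => j₁ ≤ t)).card = f)
    (hj₁0 : (freeSet n x).card < f → j₁ = 0)
    (j₂ : ℕ)
    (hj₂ : f + 1 ≤ (freeSet n x).card →
      j₂ ∈ freeSet n x ∧ ((freeSet n x).filter (fun t => j₂ ≤ t)).card = f + 1)
    (hj₂0 : (freeSet n x).card < f + 1 → j₂ = 0) :
    psiSingle n f β (fun t => x t + (if t = i then 1 else 0)) - psiSingle n f β x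
      = if j₁ ≤ i then β j₂ - β i else 0 :=
  greedy_marginal_value_general n β hβ0 hβ1 hβstrict f x hx i hi hxi j₁ hj₁ hj₁0 j₂ hj₂ hj₂0
end

section
/- Let X be a matroid on the finite ground set N = {1,…,n} and let β ∈ ℝ_+^n satisfy 0 ≤ β_1 < β_2 < … < β_n (Assumption A1). Let f ∈ ℤ_+ and define ψ(x) = max{ β^T y : y ∈ {0,1}^n, y ≤ 1 − x, Σ_{i=1}^n y_i ≤ f } for x ∈ {0,1}^n. Then every independent set of X of maximum total weight Σ_{i} β_i x_i minimizes ψ over all independent sets of X; that is, if x* ∈ {0,1}^n is the incidence vector of a maximum-weight independent set of X, then ψ(x*) = min{ ψ(x) : x is the incidence vector of an independent set of X }. -/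
/-- The incidence vector of a finite set of ground elements. -/
noncomputable def indVec (A : Finset ℕ) : ℕ → ℝ := fun i => if i ∈ A then 1 else 0

/-!
Since `β` is strictly increasing, a maximum-weight independent set `S` is greedy: for every
threshold `m` with `β m > 0` it has at least as many elements `≥ m` as any independent set `A`,
for otherwise exchanging an element `≥ m` of `A` into `S` would increase its weight. Taking
complements in `[1, n]`, the elements left to the follower by `A` dominate those left by `S` in
every such upper segment, so by Hall's theorem each positive-weight element the follower picks
against `S` can be matched injectively to a larger one available against `A`. Elements of weight
zero (only `1`, when `β 1 = 0`) are dropped first: at `m = 1` the count `#A ≤ #S` may fail.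
-/

open Finset

namespace Matroid

variable {α : Type*} {M : Matroid α}

lemma Indep.insert_indep_or_exists_insert_sdiff_indep {S I : Set α} {e : α} (hS : M.Indep S)
    (heS : e ∉ S) (heI : M.Indep (insert e I)) :
    M.Indep (insert e S) ∨ ∃ g ∈ S \ I, M.Indep (insert e S \ {g}) := by
  by_cases hcl : e ∈ M.closure S
  · right
    have hC := hS.fundCircuit_isCircuit hcl heS
    obtain ⟨g, hgC, hgI⟩ := Set.not_subset.1 fun hsub => hC.not_indep (heI.subset hsub)
    have hgS : g ∈ S := by
      rcases M.fundCircuit_subset_insert e S hgC with rfl | hgS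
      · exact absurd (Set.mem_insert g I) hgI
      · exact hgS
    exact ⟨g, ⟨hgS, fun hg => hgI (Set.mem_insert_of_mem e hg)⟩,
      (hS.mem_fundCircuit_iff hcl heS).1 hgC⟩
  · exact .inl ((hS.insert_indep_iff_of_notMem heS).2
      ⟨heI.subset_ground (Set.mem_insert e I), hcl⟩)

def IsMaxWeightIndep {R : Type*} [AddCommMonoid R] [LE R] (M : Matroid α) (w : α → R)
    (S : Finset α) : Prop :=
  M.Indep ↑S ∧ ∀ A : Finset α, M.Indep ↑A → ∑ i ∈ A, w i ≤ ∑ i ∈ S, w i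

/-- Otherwise an element of `A` satisfying `p` could be exchanged into `S` against an element
of lower weight. -/
lemma IsMaxWeightIndep.card_filter_le [DecidableEq α] {w : α → ℝ} {S A : Finset α}
    {p : α → Prop} [DecidablePred p] (hS : M.IsMaxWeightIndep w S)
    (hpos : ∀ e ∈ M.E, p e → 0 < w e)
    (hgap : ∀ e ∈ M.E, ∀ g ∈ M.E, p e → ¬ p g → w g < w e) (hA : M.Indep ↑A) :
    #{x ∈ A | p x} ≤ #{x ∈ S | p x} := by
  by_contra! hlt
  obtain ⟨e, heA, heS', hindep⟩ :=
    (hS.1.subset (filter_subset p S)).augment_finset (hA.subset (filter_subset p A)) hlt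
  obtain ⟨heA, hpe⟩ := mem_filter.1 heA
  have heE : e ∈ M.E := hA.subset_ground heA
  have heS : e ∉ S := fun he => heS' (mem_filter.2 ⟨he, hpe⟩)
  rcases hS.1.insert_indep_or_exists_insert_sdiff_indep (mem_coe.not.2 heS)
    hindep with hins | ⟨g, ⟨hgS, hgp⟩, hexch⟩
  · have := hS.2 (insert e S) (by rwa [coe_insert])
    rw [sum_insert heS] at this
    linarith [hpos e heE hpe]
  · rw [mem_coe] at hgS hgp
    have hge : g ≠ e := fun h => heS (h ▸ hgS)
    have hpg : ¬ p g := fun h => hgp (mem_filter.2 ⟨hgS, h⟩)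
    have := hS.2 (insert e (S.erase g)) (by
      rwa [coe_insert, coe_erase, Set.insert_sdiff_singleton_comm hge.symm])
    rw [sum_insert fun h => heS (mem_of_mem_erase h), ← add_sum_erase S w hgS] at this
    linarith [hgap e heE g (hS.1.subset_ground hgS) hpe hpg]

end Matroid

lemma Finset.exists_subset_card_eq_sum_le {α M : Type*} [LinearOrder α] [AddCommMonoid M]
    [PartialOrder M] [IsOrderedAddMonoid M] {B C : Finset α}
    (hdom : ∀ m ∈ B, #{x ∈ B | m ≤ x} ≤ #{x ∈ C | m ≤ x}) {w : α → M}
    (hw : MonotoneOn w ↑(B ∪ C)) :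
    ∃ B' ⊆ C, #B' = #B ∧ ∑ x ∈ B, w x ≤ ∑ x ∈ B', w x := by
  let above (b : B) : Finset α := {c ∈ C | (b : α) ≤ c}
  -- Hall's condition for a family `s` of elements of `B` is the hypothesis at its minimum.
  have hall (s : Finset B) : #s ≤ #(s.biUnion above) := by
    rcases s.eq_empty_or_nonempty with rfl | hs
    · simp
    obtain ⟨b₀, hb₀s, hb₀min⟩ := s.exists_min_image Subtype.val hs
    calc #s = #(s.map (Function.Embedding.subtype _)) := (card_map _).symm
      _ ≤ #{x ∈ B | (b₀ : α) ≤ x} := card_le_card fun x hx => by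
          obtain ⟨b, hbs, rfl⟩ := mem_map.1 hx
          exact mem_filter.2 ⟨b.2, hb₀min b hbs⟩
      _ ≤ #{x ∈ C | (b₀ : α) ≤ x} := hdom b₀ b₀.2
      _ ≤ #(s.biUnion above) := card_le_card fun c hc => mem_biUnion.2 ⟨b₀, hb₀s, hc⟩
  obtain ⟨φ, hφinj, hφ⟩ := (all_card_le_biUnion_card_iff_exists_injective above).1 hall
  refine ⟨B.attach.image φ, fun c hc => ?_, ?_, ?_⟩
  · obtain ⟨b, -, rfl⟩ := mem_image.1 hc
    exact (mem_filter.1 (hφ b)).1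
  · rw [card_image_of_injective _ hφinj, card_attach]
  · rw [sum_image fun x _ y _ h => hφinj h, ← sum_attach B w]
    refine sum_le_sum fun b _ => ?_
    obtain ⟨hφC, hbφ⟩ := mem_filter.1 (hφ b)
    exact hw (by simp) (by simp [hφC]) hbφ

lemma Finset.card_filter_sdiff_of_subset {α : Type*} [DecidableEq α] {s t : Finset α}
    (p : α → Prop) [DecidablePred p] (h : t ⊆ s) :
    #{x ∈ s \ t | p x} = #{x ∈ s | p x} - #{x ∈ t | p x} := by
  rw [← card_sdiff_of_subset (filter_subset_filter p h)]
  congr 1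
  ext x
  simp only [mem_filter, mem_sdiff]
  tauto

lemma sum_mul_indVec (g : ℕ → ℝ) {s B : Finset ℕ} (hB : B ⊆ s) :
    ∑ i ∈ s, g i * indVec B i = ∑ i ∈ B, g i := by
  simp only [indVec, mul_ite, mul_one, mul_zero]
  rw [sum_ite_mem, inter_eq_right.2 hB]

lemma psiSingle_indVec (n f : ℕ) (β : ℕ → ℝ) (A : Finset ℕ) :
    psiSingle n f β (indVec A) =
      sSup ((fun B => ∑ i ∈ B, β i) '' {B | B ⊆ Icc 1 n \ A ∧ #B ≤ f}) := by
  unfold psiSingle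
  congr 1
  ext v
  constructor
  · rintro ⟨y, hy01, hyA, hyf, rfl⟩
    let B : Finset ℕ := {i ∈ Icc 1 n | y i = 1}
    have hyB : ∀ i ∈ Icc 1 n, y i = indVec B i := fun i hi => by
      rcases hy01 i with h | h <;> simp [B, indVec, h, hi]
    have hsum (g : ℕ → ℝ) : ∑ i ∈ Icc 1 n, g i * y i = ∑ i ∈ B, g i := by
      rw [← sum_mul_indVec g (filter_subset _ _)]
      exact sum_congr rfl fun i hi => by rw [hyB i hi]
    refine ⟨B, ⟨fun i hi => ?_, ?_⟩, (hsum β).symm⟩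
    · obtain ⟨hin, hy1⟩ := mem_filter.1 hi
      refine mem_sdiff.2 ⟨hin, fun hiA => ?_⟩
      have := hyA i
      norm_num [indVec, hiA, hy1] at this
    · have := hsum 1
      simp only [Pi.one_apply, one_mul, sum_const, nsmul_eq_mul, mul_one] at this
      exact_mod_cast this ▸ hyf
  · rintro ⟨B, ⟨hBA, hBf⟩, rfl⟩
    have hB : B ⊆ Icc 1 n := hBA.trans sdiff_subset
    refine ⟨indVec B, fun i => ?_, fun i => ?_, ?_, (sum_mul_indVec β hB).symm⟩
    · by_cases h : i ∈ B <;> simp [indVec, h]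
    · by_cases hiB : i ∈ B
      · simp [indVec, hiB, (mem_sdiff.1 (hBA hiB)).2]
      · by_cases hiA : i ∈ A <;> simp [indVec, hiB, hiA]
    · have := sum_mul_indVec 1 hB
      simp only [Pi.one_apply, one_mul, sum_const, nsmul_eq_mul, mul_one] at this
      exact this ▸ by exact_mod_cast hBf

lemma psiSingle_indVec_le_of_forall_exists (n f : ℕ) (β : ℕ → ℝ) {A₁ A₂ : Finset ℕ}
    (h : ∀ B ⊆ Icc 1 n \ A₁, #B ≤ f →
      ∃ B' ⊆ Icc 1 n \ A₂, #B' ≤ f ∧ ∑ i ∈ B, β i ≤ ∑ i ∈ B', β i) :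
    psiSingle n f β (indVec A₁) ≤ psiSingle n f β (indVec A₂) := by
  rw [psiSingle_indVec, psiSingle_indVec]
  have hfin : {B | B ⊆ Icc 1 n \ A₂ ∧ #B ≤ f}.Finite :=
    (Icc 1 n \ A₂).powerset.finite_toSet.subset fun B hB => mem_powerset.2 hB.1
  refine csSup_le ⟨0, ∅, by simp⟩ ?_
  rintro _ ⟨B, ⟨hBA, hBf⟩, rfl⟩
  obtain ⟨B', hB'A, hB'f, hle⟩ := h B hBA hBf
  exact hle.trans (le_csSup (hfin.image _).bddAbove ⟨B', ⟨hB'A, hB'f⟩, rfl⟩)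

lemma psiSingle_indVec_le_of_isMaxWeightIndep {n f : ℕ} {X : Matroid ℕ}
    (hE : X.E = ↑(Icc 1 n)) {β : ℕ → ℝ} (hβ : StrictMonoOn β ↑(Icc 1 n))
    (hβ0 : ∀ i ∈ Icc 1 n, 0 ≤ β i) {S A : Finset ℕ} (hS : X.IsMaxWeightIndep β S)
    (hA : X.Indep ↑A) :
    psiSingle n f β (indVec S) ≤ psiSingle n f β (indVec A) := by
  have hSE : S ⊆ Icc 1 n := coe_subset.1 (hE ▸ hS.1.subset_ground)
  have hAE : A ⊆ Icc 1 n := coe_subset.1 (hE ▸ hA.subset_ground)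
  refine psiSingle_indVec_le_of_forall_exists n f β fun B hBS hBf => ?_
  let Bpos : Finset ℕ := {i ∈ B | 0 < β i}
  have hsum : ∑ i ∈ Bpos, β i = ∑ i ∈ B, β i := sum_filter_of_ne fun i hi hne =>
    lt_of_le_of_ne (hβ0 i (sdiff_subset (hBS hi))) hne.symm
  have hdom : ∀ m ∈ Bpos, #{x ∈ Bpos | m ≤ x} ≤ #{x ∈ Icc 1 n \ A | m ≤ x} := by
    intro m hm
    obtain ⟨hmB, hm0⟩ := mem_filter.1 hm
    have hmE : m ∈ Icc 1 n := sdiff_subset (hBS hmB)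
    have hheavy : #{x ∈ A | m ≤ x} ≤ #{x ∈ S | m ≤ x} := by
      refine hS.card_filter_le (fun e he hme => ?_) (fun e he g hg hme hmg => ?_) hA
      · rw [hE] at he
        exact hm0.trans_le (hβ.monotoneOn hmE he hme)
      · rw [hE] at he hg
        exact hβ hg he (by omega)
    calc #{x ∈ Bpos | m ≤ x} ≤ #{x ∈ Icc 1 n \ S | m ≤ x} :=
          card_le_card (filter_subset_filter _ ((filter_subset _ B).trans hBS))
      _ = #{x ∈ Icc 1 n | m ≤ x} - #{x ∈ S | m ≤ x} := card_filter_sdiff_of_subset _ hSE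
      _ ≤ #{x ∈ Icc 1 n | m ≤ x} - #{x ∈ A | m ≤ x} := Nat.sub_le_sub_left hheavy _
      _ = #{x ∈ Icc 1 n \ A | m ≤ x} := (card_filter_sdiff_of_subset _ hAE).symm
  have hmono : MonotoneOn β ↑(Bpos ∪ (Icc 1 n \ A)) := hβ.monotoneOn.mono <| by
    rw [coe_subset]
    exact union_subset ((filter_subset _ B).trans (hBS.trans sdiff_subset)) sdiff_subset
  obtain ⟨B', hB'A, hB'card, hle⟩ := exists_subset_card_eq_sum_le hdom hmono
  exact ⟨B', hB'A, hB'card ▸ (card_filter_le B _).trans hBf, hsum ▸ hle⟩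

/-- Theorem 4: if `k_f = 1` and Assumption A1 holds
(`0 ≤ β_1 < β_2 < ⋯ < β_n`), then any maximum-weight independent set of the
leader's matroid `X` minimizes `ψ` over all independent sets of `X`. -/
theorem max_weight_indep_minimizes_psi (n : ℕ) (X : Matroid ℕ)
    (hE : X.E = ↑(Finset.Icc 1 n))
    (β : ℕ → ℝ) (hβ1 : 0 ≤ β 1)
    (hβstrict : ∀ i j : ℕ, 1 ≤ i → i < j → j ≤ n → β i < β j)
    (f : ℕ)
    (Astar : Finset ℕ) (hAstar : X.Indep ↑Astar)
    (hAmax : ∀ A : Finset ℕ, X.Indep ↑A → ∑ i ∈ A, β i ≤ ∑ i ∈ Astar, β i) :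
    psiSingle n f β (indVec Astar)
      = sInf {v : ℝ | ∃ A : Finset ℕ, X.Indep ↑A ∧ v = psiSingle n f β (indVec A)} := by
  have hβ : StrictMonoOn β ↑(Icc 1 n) := fun i hi j hj hij =>
    hβstrict i j (mem_Icc.1 hi).1 hij (mem_Icc.1 hj).2
  have hβ0 : ∀ i ∈ Icc 1 n, 0 ≤ β i := by
    intro i hi
    obtain ⟨h1i, hin⟩ := mem_Icc.1 hi
    exact hβ1.trans (hβ.monotoneOn (mem_Icc.2 ⟨le_rfl, h1i.trans hin⟩) hi h1i)
  refine Eq.symm <| IsLeast.csInf_eq ⟨⟨Astar, hAstar, rfl⟩, ?_⟩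
  rintro _ ⟨A, hA, rfl⟩
  exact psiSingle_indVec_le_of_isMaxWeightIndep hE hβ hβ0 ⟨hAstar, hAmax⟩ hA
end

section
/- Let X be a matroid on the finite ground set N = {1,…,n} and let β ∈ ℝ_+^n satisfy 0 ≤ β_1 < β_2 < … < β_n (Assumption A1), with β_0 := 0. Then there exists an independent set of X, with incidence vector x* ∈ {0,1}^n, that is simultaneously optimal for all truncated weight functions: for every j ∈ {0,1,…,n}, x* maximizes Σ_{i = j+1}^n (β_i − β_j) x_i over the incidence vectors x of all independent sets of X. In particular (taking j = 0), x* is a maximum-weight independent set of X. -/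
/-!
Process the ground set from the largest element down, extending at each step a basis of the
elements seen so far. The resulting independent set `I` has the property that, for every `t`, its
elements above `t` form a basis of the ground elements above `t`; hence no independent set has more
elements above `t` than `I`. A truncated weight `∑_{i > j} (β_i - β_j)` is, by Abel summation, a
nonnegative combination of these tail counts, since `β` is nondecreasing.
-/

open Finset

section AbelSummation

variable {R : Type*} [AddCommGroup R]

theorem sum_filter_lt_sub_eq_sum_Ico_card_smul (β : ℕ → R) {A : Finset ℕ} {n : ℕ}
    (hA : ∀ i ∈ A, i ≤ n) (j : ℕ) :
    ∑ i ∈ A with j < i, (β i - β j) = ∑ t ∈ Ico j n, #{i ∈ A | t < i} • (β (t + 1) - β t) :=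
  calc ∑ i ∈ A with j < i, (β i - β j)
      = ∑ i ∈ A with j < i, ∑ t ∈ Ico j n with t < i, (β (t + 1) - β t) := by
        refine sum_congr rfl fun i hi => ?_
        have hIco : {t ∈ Ico j n | t < i} = Ico j i := by
          ext t
          simp only [mem_filter, mem_Ico]
          have := hA i (mem_filter.mp hi).1
          omega
        rw [hIco, sum_Ico_sub β (mem_filter.mp hi).2.le]
    _ = ∑ t ∈ Ico j n, ∑ i ∈ A with t < i, (β (t + 1) - β t) := by
        refine sum_comm' fun i t => ?_
        simp only [mem_filter, mem_Ico]
        grind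
    _ = ∑ t ∈ Ico j n, #{i ∈ A | t < i} • (β (t + 1) - β t) := by simp only [sum_const]

theorem sum_filter_lt_sub_le_of_card_filter_lt_le [PartialOrder R] [IsOrderedAddMonoid R]
    {β : ℕ → R} {A B : Finset ℕ} {n j : ℕ} (hA : ∀ i ∈ A, i ≤ n) (hB : ∀ i ∈ B, i ≤ n)
    (hβ : ∀ t ∈ Ico j n, β t ≤ β (t + 1))
    (hAB : ∀ t ∈ Ico j n, #{i ∈ A | t < i} ≤ #{i ∈ B | t < i}) :
    ∑ i ∈ A with j < i, (β i - β j) ≤ ∑ i ∈ B with j < i, (β i - β j) := by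
  rw [sum_filter_lt_sub_eq_sum_Ico_card_smul β hA, sum_filter_lt_sub_eq_sum_Ico_card_smul β hB]
  exact sum_le_sum fun t ht => nsmul_le_nsmul_left (sub_nonneg.mpr (hβ t ht)) (hAB t ht)

end AbelSummation

namespace Matroid

variable {α : Type*} [LinearOrder α] {M : Matroid α}

theorem exists_isBasis_forall_isBasis_inter_Ioi (S : Finset α) (hS : ↑S ⊆ M.E) :
    ∃ I : Finset α, M.IsBasis ↑I ↑S ∧ ∀ t, M.IsBasis (↑I ∩ Set.Ioi t) (↑S ∩ Set.Ioi t) := by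
  classical
  induction S using Finset.induction_on_min with
  | empty => exact ⟨∅, by simp, fun t => by simp⟩
  | insert a s has ih =>
    rw [coe_insert] at hS ⊢
    obtain ⟨I, hIs, hI⟩ := ih ((Set.subset_insert a _).trans hS)
    obtain ⟨J, hJ, hIJ⟩ :=
      hIs.indep.subset_isBasis_of_subset (hIs.subset.trans (Set.subset_insert a _)) hS
    have hJfin : J.Finite := (insert a s).finite_toSet.subset (by simpa using hJ.subset)
    refine ⟨hJfin.toFinset, by rwa [hJfin.coe_toFinset], fun t => ?_⟩
    rw [hJfin.coe_toFinset]
    rcases lt_or_ge t a with hta | hat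
    · have hgt : insert a (s : Set α) ⊆ Set.Ioi t := by
        rintro x (rfl | hx)
        exacts [hta, hta.trans (has x hx)]
      rwa [Set.inter_eq_left.mpr hgt, Set.inter_eq_left.mpr (hJ.subset.trans hgt)]
    · have hs : insert a (s : Set α) ∩ Set.Ioi t = ↑s ∩ Set.Ioi t :=
        Set.insert_inter_of_notMem (Set.notMem_Ioi.mpr hat)
      have hJt : J ∩ Set.Ioi t = J ∩ (↑s ∩ Set.Ioi t) := by
        rw [← hs, ← Set.inter_assoc, Set.inter_eq_left.mpr hJ.subset]
      rw [hs, hJt, (hI t).inter_eq_of_subset_indep ((Set.inter_subset_left).trans hIJ) hJ.indep]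
      exact hI t

theorem card_filter_lt_le_of_forall_isBasis_inter_Ioi {S : Set α} {I A : Finset α}
    (hI : ∀ t, M.IsBasis (↑I ∩ Set.Ioi t) (S ∩ Set.Ioi t)) (hA : M.Indep ↑A) (hAS : ↑A ⊆ S)
    (t : α) : #{i ∈ A | t < i} ≤ #{i ∈ I | t < i} := by
  have hAt : M.Indep (↑A ∩ Set.Ioi t) := hA.subset Set.inter_subset_left
  have hle : (↑A ∩ Set.Ioi t).encard ≤ (↑I ∩ Set.Ioi t).encard :=
    (hAt.encard_le_eRk_of_subset (Set.inter_subset_inter_left _ hAS)).trans_eq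
      (hI t).encard_eq_eRk.symm
  have hcoe (B : Finset α) : (↑{i ∈ B | t < i} : Set α) = ↑B ∩ Set.Ioi t := by ext; simp
  rw [← hcoe, ← hcoe, Set.encard_coe_eq_coe_finsetCard, Set.encard_coe_eq_coe_finsetCard] at hle
  exact_mod_cast hle

end Matroid

/-- under Assumption A1 (`0 ≤ β_1 < β_2 < ⋯ < β_n`, `β_0 = 0`),
there is an independent set of the matroid `X` that simultaneously maximizes all
truncated weight functions `x ↦ ∑_{i > j} (β_i - β_j) x_i`, `j ∈ {0,1,…,n}`;
in particular (taking `j = 0`) it is a maximum-weight independent set of `X`. -/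
theorem exists_simultaneous_greedy_optimum (n : ℕ) (X : Matroid ℕ)
    (hE : X.E = ↑(Finset.Icc 1 n))
    (β : ℕ → ℝ) (hβ0 : β 0 = 0) (hβ1 : 0 ≤ β 1)
    (hβstrict : ∀ i j : ℕ, 1 ≤ i → i < j → j ≤ n → β i < β j) :
    ∃ Astar : Finset ℕ, X.Indep ↑Astar ∧
      (∀ j : ℕ, j ≤ n → ∀ A : Finset ℕ, X.Indep ↑A →
        ∑ i ∈ A.filter (fun i => j < i), (β i - β j)
          ≤ ∑ i ∈ Astar.filter (fun i => j < i), (β i - β j)) ∧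
      (∀ A : Finset ℕ, X.Indep ↑A → ∑ i ∈ A, β i ≤ ∑ i ∈ Astar, β i) := by
  obtain ⟨I, hIbasis, hI⟩ := X.exists_isBasis_forall_isBasis_inter_Ioi (Icc 1 n) hE.ge
  have hground {A : Finset ℕ} (hA : X.Indep ↑A) : ∀ i ∈ A, 1 ≤ i ∧ i ≤ n := fun i hi => by
    simpa [hE] using hA.subset_ground hi
  have hmono : ∀ t < n, β t ≤ β (t + 1) := fun t ht => by
    rcases t.eq_zero_or_pos with rfl | ht0
    · simpa [hβ0] using hβ1
    · exact (hβstrict t (t + 1) ht0 t.lt_succ_self ht).le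
  have hopt (j : ℕ) {A : Finset ℕ} (hA : X.Indep ↑A) :
      ∑ i ∈ A with j < i, (β i - β j) ≤ ∑ i ∈ I with j < i, (β i - β j) :=
    sum_filter_lt_sub_le_of_card_filter_lt_le (fun i hi => (hground hA i hi).2)
      (fun i hi => (hground hIbasis.indep i hi).2) (fun t ht => hmono t (mem_Ico.mp ht).2)
      (fun t _ => Matroid.card_filter_lt_le_of_forall_isBasis_inter_Ioi hI hA
        (hE ▸ hA.subset_ground) t)
  have hweight {A : Finset ℕ} (hA : X.Indep ↑A) :
      ∑ i ∈ A with 0 < i, (β i - β 0) = ∑ i ∈ A, β i := by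
    rw [filter_true_of_mem fun i hi => show 0 < i from (hground hA i hi).1, hβ0]
    simp only [sub_zero]
  refine ⟨I, hIbasis.indep, fun j _ A hA => hopt j hA, fun A hA => ?_⟩
  simpa only [hweight hA, hweight hIbasis.indep] using hopt 0 hA
end

section
/- Assume β_1 ≤ β_2 ≤ … ≤ β_n. Then the partition matroid interdiction problem min_{x ∈ I_X} ψ(x) admits an optimal solution x* ∈ I_X with the following monotone structure: for every k ∈ {1,…,k_f}, every k' ∈ {1,…,k_l}, and every pair of elements i', i'' ∈ F_k ∩ L_{k'} with i' < i'', it holds that x*_{i'} ≤ x*_{i''}. -/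
open Finset Equiv

theorem Finset.sum_comp_swap_of_mem_iff {ι M : Type*} [DecidableEq ι] [AddCommMonoid M]
    {s : Finset ι} {a b : ι} (h : a ∈ s ↔ b ∈ s) (g : ι → M) :
    ∑ i ∈ s, g (swap a b i) = ∑ i ∈ s, g i := by
  by_cases ha : a ∈ s
  · refine Perm.sum_comp (swap a b) s g fun i hi => ?_
    rcases (swap_apply_ne_self_iff.1 hi).2 with rfl | rfl
    exacts [ha, h.1 ha]
  · exact sum_congr rfl fun i hi =>
      congrArg g (swap_apply_of_ne_of_ne (ne_of_mem_of_not_mem hi ha)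
        (ne_of_mem_of_not_mem hi (mt h.2 ha)))

theorem Finset.sum_mul_comp_swap {ι R : Type*} [DecidableEq ι] [CommRing R] {s : Finset ι}
    {a b : ι} (ha : a ∈ s) (hb : b ∈ s) (hab : a ≠ b) (w g : ι → R) :
    ∑ i ∈ s, w i * g (swap a b i) = ∑ i ∈ s, w i * g i + (w b - w a) * (g a - g b) := by
  have hdiff : ∑ i ∈ s, (w i * g (swap a b i) - w i * g i)
      = (w a * g b - w a * g a) + (w b * g a - w b * g b) := by
    rw [sum_eq_add_of_mem (f := fun i => w i * g (swap a b i) - w i * g i) a b ha hb hab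
      fun i _ hi => by simp only [swap_apply_of_ne_of_ne hi.1 hi.2, sub_self]]
    simp only [swap_apply_left, swap_apply_right]
  rw [sum_sub_distrib] at hdiff
  linear_combination hdiff

theorem mem_iff_mem_of_pairwise_disjoint {ι κ : Type*} {P : κ → Finset ι}
    (hdisj : ∀ k k', k ≠ k' → Disjoint (P k) (P k')) {a b : ι} {k : κ}
    (ha : a ∈ P k) (hb : b ∈ P k) (k' : κ) : a ∈ P k' ↔ b ∈ P k' := by
  by_cases hk : k' = k
  · subst hk; exact iff_of_true ha hb
  · exact iff_of_false (disjoint_left.1 (hdisj k k' (Ne.symm hk)) ha)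
      (disjoint_left.1 (hdisj k k' (Ne.symm hk)) hb)

theorem nonneg_of_zero_or_one {x : ℝ} (h : x = 0 ∨ x = 1) : 0 ≤ x := by
  rcases h with rfl | rfl <;> norm_num

theorem leaderFeas.le_one {kl : ℕ} {L : Fin kl → Finset ℕ} {l : Fin kl → ℕ} {x : ℕ → ℝ}
    (hx : leaderFeas kl L l x) (i : ℕ) : x i ≤ 1 := by
  rcases hx.1 i with h | h <;> simp [h]

/-- The follower's feasible set `I_Y(x)`. -/
def followerFeas (kf : ℕ) (F : Fin kf → Finset ℕ) (f : Fin kf → ℕ) (x y : ℕ → ℝ) : Prop :=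
  (∀ i, y i = 0 ∨ y i = 1) ∧ (∀ i, y i ≤ 1 - x i) ∧ ∀ k : Fin kf, ∑ i ∈ F k, y i ≤ (f k : ℝ)

section Follower

variable {n kf : ℕ} {F : Fin kf → Finset ℕ} {f : Fin kf → ℕ} {β : ℕ → ℝ}

theorem psi_eq_sSup_image :
    psi n kf F f β = fun x =>
      sSup ((fun y => ∑ i ∈ Icc 1 n, β i * y i) '' {y | followerFeas kf F f x y}) := by
  funext x
  rw [psi]
  congr 1
  ext v
  exact ⟨fun ⟨y, h01, hx, hF, hv⟩ => ⟨y, ⟨h01, hx, hF⟩, hv.symm⟩,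
    fun ⟨y, ⟨h01, hx, hF⟩, hv⟩ => ⟨y, h01, hx, hF, hv.symm⟩⟩

theorem followerFeas_zero {x : ℕ → ℝ} (hx : ∀ i, x i ≤ 1) : followerFeas kf F f x 0 :=
  ⟨fun _ => Or.inl rfl, fun i => by simpa using hx i, fun k => by simp⟩

theorem bddAbove_followerValues (x : ℕ → ℝ) :
    BddAbove ((fun y => ∑ i ∈ Icc 1 n, β i * y i) '' {y | followerFeas kf F f x y}) := by
  refine ⟨∑ i ∈ Icc 1 n, |β i|, ?_⟩
  rintro _ ⟨y, hy, rfl⟩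
  refine sum_le_sum fun i _ => ?_
  rcases hy.1 i with h | h <;> simp [h, le_abs_self]

theorem psi_le_psi {x x' : ℕ → ℝ} (hx : ∀ i, x i ≤ 1)
    (h : ∀ y, followerFeas kf F f x y → ∃ y', followerFeas kf F f x' y' ∧
      ∑ i ∈ Icc 1 n, β i * y i ≤ ∑ i ∈ Icc 1 n, β i * y' i) :
    psi n kf F f β x ≤ psi n kf F f β x' := by
  rw [psi_eq_sSup_image]
  refine csSup_le ⟨_, 0, followerFeas_zero hx, rfl⟩ ?_
  rintro _ ⟨y, hy, rfl⟩
  obtain ⟨y', hy', hle⟩ := h y hy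
  exact le_csSup_of_le (bddAbove_followerValues x') ⟨y', hy', rfl⟩ hle

theorem psi_indicator_Icc_le {x : ℕ → ℝ} (hx : ∀ i, x i ≤ 1) :
    psi n kf F f β ((Set.Icc 1 n).indicator x) ≤ psi n kf F f β x := by
  have hx' : ∀ i, (Set.Icc 1 n).indicator x i ≤ 1 := fun i => by
    rw [Set.indicator_apply]; split_ifs <;> simp [hx i]
  refine psi_le_psi hx' fun y ⟨hy01, hyx, hyF⟩ =>
    ⟨(Set.Icc 1 n).indicator y, ⟨fun i => ?_, fun i => ?_, fun k => ?_⟩, ?_⟩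
  · rw [Set.indicator_apply]; split_ifs
    exacts [hy01 i, Or.inl rfl]
  · have := hyx i
    rw [Set.indicator_apply] at this ⊢; split_ifs at this ⊢
    exacts [this, by linarith [hx i]]
  · refine le_trans (sum_le_sum fun i _ => ?_) (hyF k)
    exact Set.indicator_le_self' (fun j _ => nonneg_of_zero_or_one (hy01 j)) i
  · refine (sum_congr rfl fun i hi => ?_).le
    rw [Set.indicator_of_mem (by simpa using hi)]

end Follower

theorem psi_comp_swap_le {n kf : ℕ} {F : Fin kf → Finset ℕ} {f : Fin kf → ℕ} {β : ℕ → ℝ}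
    {x : ℕ → ℝ} (hx : ∀ i, x i ≤ 1) {a b : ℕ} (ha : a ∈ Icc 1 n) (hb : b ∈ Icc 1 n)
    (hab : a ≠ b) (hβ : β a ≤ β b) (hF : ∀ k, a ∈ F k ↔ b ∈ F k) (hxa : x a = 1) :
    psi n kf F f β (x ∘ swap a b) ≤ psi n kf F f β x := by
  refine psi_le_psi (fun i => hx _) fun y ⟨hy01, hyx, hyF⟩ =>
    ⟨y ∘ swap a b, ⟨fun i => hy01 _, fun i => ?_, fun k => ?_⟩, ?_⟩
  · simpa using hyx (swap a b i)
  · exact (sum_comp_swap_of_mem_iff (hF k) y).trans_le (hyF k)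
  · have hyb : y b = 0 := by
      have := hyx b
      simp only [Function.comp_apply, swap_apply_right, hxa, sub_self] at this
      exact le_antisymm this (nonneg_of_zero_or_one (hy01 b))
    have hgain := mul_nonneg (sub_nonneg.2 hβ) (nonneg_of_zero_or_one (hy01 a))
    simp only [Function.comp_apply, sum_mul_comp_swap ha hb hab, hyb, sub_zero]
    linarith

theorem leaderFeas_comp_swap {kl : ℕ} {L : Fin kl → Finset ℕ} {l : Fin kl → ℕ} {x : ℕ → ℝ}
    (hx : leaderFeas kl L l x) {a b : ℕ} (hL : ∀ k, a ∈ L k ↔ b ∈ L k) :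
    leaderFeas kl L l (x ∘ swap a b) :=
  ⟨fun _ => hx.1 _, fun k => (sum_comp_swap_of_mem_iff (hL k) x).trans_le (hx.2 k)⟩

def groundLeaderFeas (n kl : ℕ) (L : Fin kl → Finset ℕ) (l : Fin kl → ℕ) : Set (ℕ → ℝ) :=
  {x | leaderFeas kl L l x ∧ Function.support x ⊆ Set.Icc 1 n}

section Ground

variable {n kl : ℕ} {L : Fin kl → Finset ℕ} {l : Fin kl → ℕ}

theorem zero_mem_groundLeaderFeas : (0 : ℕ → ℝ) ∈ groundLeaderFeas n kl L l :=
  ⟨⟨fun _ => Or.inl rfl, fun k => by simp⟩, by simp⟩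

theorem groundLeaderFeas_finite : (groundLeaderFeas n kl L l).Finite := by
  refine ((Icc 1 n).powerset.finite_toSet.image
    fun S : Finset ℕ => (S : Set ℕ).indicator 1).subset ?_
  rintro x ⟨⟨hx01, -⟩, hsupp⟩
  refine ⟨(Icc 1 n).filter (x · = 1), mem_powerset.2 (filter_subset _ _), funext fun i => ?_⟩
  rcases hx01 i with h | h
  · simp [h]
  · have hi : i ∈ Set.Icc 1 n := hsupp (by simp [h])
    simp_all

theorem indicator_mem_groundLeaderFeas {x : ℕ → ℝ} (hx : leaderFeas kl L l x) :
    (Set.Icc 1 n).indicator x ∈ groundLeaderFeas n kl L l := by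
  refine ⟨⟨fun i => ?_, fun k => ?_⟩, Set.support_indicator_subset⟩
  · rw [Set.indicator_apply]; split_ifs
    exacts [hx.1 i, Or.inl rfl]
  · refine le_trans (sum_le_sum fun i _ => ?_) (hx.2 k)
    exact Set.indicator_le_self' (fun j _ => nonneg_of_zero_or_one (hx.1 j)) i

theorem comp_swap_mem_groundLeaderFeas {x : ℕ → ℝ} (hx : x ∈ groundLeaderFeas n kl L l)
    {a b : ℕ} (ha : a ∈ Icc 1 n) (hb : b ∈ Icc 1 n) (hL : ∀ k, a ∈ L k ↔ b ∈ L k) :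
    x ∘ swap a b ∈ groundLeaderFeas n kl L l := by
  refine ⟨leaderFeas_comp_swap hx.1 hL, fun i hi => ?_⟩
  rcases eq_or_ne i a with rfl | hia
  · simpa using ha
  rcases eq_or_ne i b with rfl | hib
  · simpa using hb
  exact hx.2 (by simpa [swap_apply_of_ne_of_ne hia hib] using hi)

end Ground

theorem apply_le_apply_of_optimal_of_weight_max {n kl kf : ℕ} {β : ℕ → ℝ}
    (hβmono : ∀ i j : ℕ, i ≤ j → j ≤ n → β i ≤ β j)
    {L : Fin kl → Finset ℕ} {l : Fin kl → ℕ} {F : Fin kf → Finset ℕ} {f : Fin kf → ℕ}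
    (hFsub : ∀ k, F k ⊆ Icc 1 n) (hLdisj : ∀ k k', k ≠ k' → Disjoint (L k) (L k'))
    (hFdisj : ∀ k k', k ≠ k' → Disjoint (F k) (F k')) {xs : ℕ → ℝ}
    (hxsC : xs ∈ groundLeaderFeas n kl L l)
    (hopt : ∀ x ∈ groundLeaderFeas n kl L l, psi n kf F f β xs ≤ psi n kf F f β x)
    (hmax : ∀ x ∈ groundLeaderFeas n kl L l, psi n kf F f β x = psi n kf F f β xs →
      ∑ i ∈ Icc 1 n, (i : ℝ) * x i ≤ ∑ i ∈ Icc 1 n, (i : ℝ) * xs i)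
    {k : Fin kf} {k' : Fin kl} {a b : ℕ} (haF : a ∈ F k) (haL : a ∈ L k') (hbF : b ∈ F k)
    (hbL : b ∈ L k') (hab : a < b) : xs a ≤ xs b := by
  by_contra! hba
  have hxa : xs a = 1 :=
    (hxsC.1.1 a).resolve_left fun h => by linarith [nonneg_of_zero_or_one (hxsC.1.1 b)]
  have hxb : xs b = 0 := (hxsC.1.1 b).resolve_right fun h => by linarith [hxsC.1.le_one a]
  have ha := hFsub k haF
  have hb := hFsub k hbF
  have hswapC := comp_swap_mem_groundLeaderFeas hxsC ha hb
    (mem_iff_mem_of_pairwise_disjoint hLdisj haL hbL)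
  have hswap : psi n kf F f β (xs ∘ swap a b) = psi n kf F f β xs :=
    le_antisymm (psi_comp_swap_le hxsC.1.le_one ha hb hab.ne
      (hβmono a b hab.le (mem_Icc.1 hb).2) (mem_iff_mem_of_pairwise_disjoint hFdisj haF hbF) hxa)
      (hopt _ hswapC)
  have hgain := hmax _ hswapC hswap
  simp only [Function.comp_apply, sum_mul_comp_swap ha hb hab.ne, hxa, hxb] at hgain
  have : (a : ℝ) < b := by exact_mod_cast hab
  linarith

theorem exists_monotone_optimal_solution_general (n kl kf : ℕ) (β : ℕ → ℝ)
    (hβmono : ∀ i j : ℕ, i ≤ j → j ≤ n → β i ≤ β j)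
    (L : Fin kl → Finset ℕ) (l : Fin kl → ℕ)
    (hLdisj : ∀ k k', k ≠ k' → Disjoint (L k) (L k'))
    (F : Fin kf → Finset ℕ) (f : Fin kf → ℕ)
    (hFsub : ∀ k, F k ⊆ Finset.Icc 1 n)
    (hFdisj : ∀ k k', k ≠ k' → Disjoint (F k) (F k')) :
    ∃ xstar : ℕ → ℝ, leaderFeas kl L l xstar ∧
      psi n kf F f β xstar
        = sInf {v : ℝ | ∃ x : ℕ → ℝ, leaderFeas kl L l x ∧ v = psi n kf F f β x} ∧
      ∀ (k : Fin kf) (k' : Fin kl) (i' i'' : ℕ),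
        i' ∈ F k → i' ∈ L k' → i'' ∈ F k → i'' ∈ L k' → i' < i'' →
        xstar i' ≤ xstar i'' := by
  set C := groundLeaderFeas n kl L l
  obtain ⟨x₀, hx₀C, hx₀min⟩ := Set.exists_min_image C (psi n kf F f β)
    groundLeaderFeas_finite ⟨0, zero_mem_groundLeaderFeas⟩
  obtain ⟨xs, ⟨hxsC, hxs⟩, hxsmax⟩ :=
    Set.exists_max_image {x ∈ C | psi n kf F f β x = psi n kf F f β x₀}
      (fun x => ∑ i ∈ Icc 1 n, (i : ℝ) * x i)
      (groundLeaderFeas_finite.subset (Set.sep_subset _ _)) ⟨x₀, hx₀C, rfl⟩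
  have hleast : IsLeast {v : ℝ | ∃ x, leaderFeas kl L l x ∧ v = psi n kf F f β x}
      (psi n kf F f β x₀) := by
    refine ⟨⟨x₀, hx₀C.1, rfl⟩, ?_⟩
    rintro _ ⟨x, hx, rfl⟩
    exact (hx₀min _ (indicator_mem_groundLeaderFeas hx)).trans
      (psi_indicator_Icc_le hx.le_one)
  refine ⟨xs, hxsC.1, by rw [hxs, hleast.csInf_eq], fun k k' a b haF haL hbF hbL hab => ?_⟩
  exact apply_le_apply_of_optimal_of_weight_max hβmono hFsub hLdisj hFdisj hxsC
    (fun x hx => hxs ▸ hx₀min x hx) (fun x hx hx' => hxsmax x ⟨hx, hx'.trans hxs⟩)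
    haF haL hbF hbL hab

/-- if `β_1 ≤ ⋯ ≤ β_n`, the PMI problem admits an optimal solution
`x*` with the monotone structure: for all `k, k'` and `i' < i''` both lying in
`F_k ∩ L_{k'}`, one has `x*_{i'} ≤ x*_{i''}`. -/
theorem exists_monotone_optimal_solution (n kl kf : ℕ) (β : ℕ → ℝ)
    (hβnn : ∀ i, 0 ≤ β i)
    (hβmono : ∀ i j : ℕ, i ≤ j → j ≤ n → β i ≤ β j)
    (L : Fin kl → Finset ℕ) (l : Fin kl → ℕ)
    (hLsub : ∀ k, L k ⊆ Finset.Icc 1 n)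
    (hLdisj : ∀ k k', k ≠ k' → Disjoint (L k) (L k'))
    (hLcover : ∀ i ∈ Finset.Icc 1 n, ∃ k, i ∈ L k)
    (F : Fin kf → Finset ℕ) (f : Fin kf → ℕ)
    (hFsub : ∀ k, F k ⊆ Finset.Icc 1 n)
    (hFdisj : ∀ k k', k ≠ k' → Disjoint (F k) (F k'))
    (hFcover : ∀ i ∈ Finset.Icc 1 n, ∃ k, i ∈ F k) :
    ∃ xstar : ℕ → ℝ, leaderFeas kl L l xstar ∧
      psi n kf F f β xstar
        = sInf {v : ℝ | ∃ x : ℕ → ℝ, leaderFeas kl L l x ∧ v = psi n kf F f β x} ∧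
      ∀ (k : Fin kf) (k' : Fin kl) (i' i'' : ℕ),
        i' ∈ F k → i' ∈ L k' → i'' ∈ F k → i'' ∈ L k' → i' < i'' →
        xstar i' ≤ xstar i'' :=
  exists_monotone_optimal_solution_general n kl kf β hβmono L l hLdisj F f hFsub hFdisj
end
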